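/- arXiv:2409.03186 — 4 statements merged into one kernel-verified Lean document; each statement's English description precedes it below -/
import Mathlib

section
/- Let m > 0 and 0 < k₁ < k₂. For every convex function φ : ℝ → ℝ such that the series ∑_{x∈ℕ} φ(x/m)·f(x;k₁,m) and ∑_{x∈ℕ} φ(x/m)·f(x;k₂,m) are (absolutely) summable, one has ∑_{x∈ℕ} φ(x/m)·f(x;k₂,m) ≤ ∑_{x∈ℕ} φ(x/m)·f(x;k₁,m). (This is the convex-order formulation of the Lorenz-order statement NB(k₂,m) ≤_L NB(k₁,m): the negative binomial distribution decreases in the Lorenz order as k increases.) -/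
open Filter Topology

noncomputable def nbCoeff (k : ℝ) (x : ℕ) : ℝ :=
  Real.Gamma (k + x) / (Real.Gamma k * (Nat.factorial x : ℝ))

lemma nbCoeff_pos {k : ℝ} (hk : 0 < k) (x : ℕ) : 0 < nbCoeff k x := by
  apply div_pos (Real.Gamma_pos_of_pos (by positivity))
  exact mul_pos (Real.Gamma_pos_of_pos hk) (by positivity)

lemma nbCoeff_zero {k : ℝ} (hk : 0 < k) : nbCoeff k 0 = 1 := by
  simp [nbCoeff, div_self (ne_of_gt (Real.Gamma_pos_of_pos hk))]

lemma nbCoeff_succ {k : ℝ} (hk : 0 < k) (x : ℕ) :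
    ((x : ℝ) + 1) * nbCoeff k (x + 1) = (k + x) * nbCoeff k x := by
  have hkx : (0:ℝ) < k + x := by positivity
  have h1 : k + ((x : ℕ) + 1 : ℕ) = (k + x) + 1 := by push_cast; ring
  have h2 : Real.Gamma (k + ((x : ℕ) + 1 : ℕ)) = (k + x) * Real.Gamma (k + x) := by
    rw [h1, Real.Gamma_add_one (ne_of_gt hkx)]
  have h3 : ((Nat.factorial (x + 1) : ℕ) : ℝ) = ((x:ℝ) + 1) * (Nat.factorial x : ℝ) := by
    rw [Nat.factorial_succ]; push_cast; ring
  have hΓ : Real.Gamma k ≠ 0 := ne_of_gt (Real.Gamma_pos_of_pos hk)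
  have hf : ((Nat.factorial x : ℕ) : ℝ) ≠ 0 := by positivity
  show ((x:ℝ) + 1) * (Real.Gamma (k + ((x+1 : ℕ):ℝ)) / (Real.Gamma k * ((Nat.factorial (x+1) : ℕ) : ℝ)))
      = (k + x) * (Real.Gamma (k + x) / (Real.Gamma k * ((Nat.factorial x : ℕ) : ℝ)))
  rw [h2, h3]
  have hx1 : ((x:ℝ) + 1) ≠ 0 := by positivity
  field_simp

lemma ratio_tendsto (k : ℝ) : Tendsto (fun n : ℕ => (k + n) / ((n : ℝ) + 1)) atTop (𝓝 1) := by
  have h : ∀ n : ℕ, (k + n) / ((n : ℝ) + 1) = 1 + (k - 1) * (1 / ((n : ℝ) + 1)) := by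
    intro n
    have : ((n : ℝ) + 1) ≠ 0 := by positivity
    field_simp
    ring
  simp only [h]
  have := tendsto_one_div_add_atTop_nhds_zero_nat (𝕜 := ℝ)
  have h2 : Tendsto (fun n : ℕ => (k - 1) * (1 / ((n : ℝ) + 1))) atTop (𝓝 0) := by
    simpa using this.const_mul (k - 1)
  simpa using tendsto_const_nhds.add h2

lemma summable_nbCoeff {k : ℝ} (hk : 0 < k) {z : ℝ} (h0 : 0 < z) (h1 : z < 1) :
    Summable (fun n : ℕ => nbCoeff k n * z ^ n) := by
  apply summable_of_ratio_test_tendsto_lt_one h1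
  · exact Eventually.of_forall (fun n => (mul_pos (nbCoeff_pos hk n) (pow_pos h0 n)).ne')
  · have key : ∀ n : ℕ, ‖nbCoeff k (n+1) * z ^ (n+1)‖ / ‖nbCoeff k n * z ^ n‖
        = (k + n) / ((n:ℝ) + 1) * z := by
      intro n
      have hc := nbCoeff_pos hk n
      have hc' := nbCoeff_pos hk (n+1)
      have hr := nbCoeff_succ hk n
      rw [Real.norm_of_nonneg (by positivity), Real.norm_of_nonneg (by positivity)]
      rw [pow_succ]
      have hn1 : ((n:ℝ) + 1) ≠ 0 := by positivity
      have : nbCoeff k (n+1) = (k + n) * nbCoeff k n / ((n:ℝ) + 1) := by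
        field_simp at hr ⊢; linarith [hr]
      rw [this]
      field_simp
    simp only [key]
    have := (ratio_tendsto k).mul_const z
    simpa using this

lemma summable_nbCoeff_deriv {k : ℝ} (hk : 0 < k) {z : ℝ} (h0 : 0 < z) (h1 : z < 1) :
    Summable (fun n : ℕ => (n : ℝ) * nbCoeff k n * z ^ (n - 1)) := by
  apply summable_of_ratio_test_tendsto_lt_one h1
  · filter_upwards [eventually_ge_atTop 1] with n hn
    have := nbCoeff_pos hk n
    have hn' : (0:ℝ) < n := by exact_mod_cast hn
    positivity
  · have key : ∀ n : ℕ, 1 ≤ n → ‖((n:ℝ)+1) * nbCoeff k (n+1) * z ^ n‖ / ‖(n:ℝ) * nbCoeff k n * z ^ (n-1)‖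
        = ((n:ℝ)+1)/(n:ℝ) * ((k + n) / ((n:ℝ) + 1)) * z := by
      intro n hn
      have hc := nbCoeff_pos hk n
      have hc' := nbCoeff_pos hk (n+1)
      have hn' : (0:ℝ) < n := by exact_mod_cast hn
      have hr := nbCoeff_succ hk n
      rw [Real.norm_of_nonneg (by positivity), Real.norm_of_nonneg (by positivity)]
      have hpow : z ^ n = z ^ (n - 1) * z := by
        conv_lhs => rw [show n = (n-1) + 1 by omega]
        rw [pow_succ]
      have hn1 : ((n:ℝ) + 1) ≠ 0 := by positivity
      have : nbCoeff k (n+1) = (k + n) * nbCoeff k n / ((n:ℝ) + 1) := by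
        field_simp at hr ⊢; linarith [hr]
      rw [this, hpow]
      have hz1 : z ^ (n-1) ≠ 0 := by positivity
      field_simp
    have htend : Tendsto (fun n : ℕ => ((n:ℝ)+1)/(n:ℝ) * ((k + n) / ((n:ℝ) + 1)) * z) atTop (𝓝 z) := by
      have ha : Tendsto (fun n : ℕ => ((n:ℝ)+1)/(n:ℝ)) atTop (𝓝 1) := by
        have heq : (fun n : ℕ => 1 + 1/(n:ℝ)) =ᶠ[atTop] (fun n : ℕ => ((n:ℝ)+1)/(n:ℝ)) := by
          filter_upwards [eventually_ge_atTop 1] with n hn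
          have hn' : (n:ℝ) ≠ 0 := by
            have : (0:ℝ) < n := by exact_mod_cast hn
            exact ne_of_gt this
          field_simp
        apply Tendsto.congr' heq
        simpa using (tendsto_const_nhds : Tendsto (fun _ : ℕ => (1:ℝ)) atTop (𝓝 1)).add (tendsto_one_div_atTop_nhds_zero_nat)
      have := (ha.mul (ratio_tendsto k)).mul_const z
      simpa using this
    apply Tendsto.congr' _ htend
    filter_upwards [eventually_ge_atTop 1] with n hn
    have := (key n hn).symm
    simpa [Nat.add_sub_cancel] using this

lemma summable_A {k : ℝ} (hk : 0 < k) {r y : ℝ} (hr0 : 0 < r) (hr1 : r < 1)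
    (hy : |y| ≤ r) : Summable (fun n : ℕ => nbCoeff k n * y ^ n) := by
  apply Summable.of_norm_bounded (summable_nbCoeff hk hr0 hr1)
  intro n
  have hc := nbCoeff_pos hk n
  rw [norm_mul, Real.norm_of_nonneg hc.le, norm_pow, Real.norm_eq_abs]
  exact mul_le_mul_of_nonneg_left (pow_le_pow_left₀ (abs_nonneg y) hy n) hc.le

lemma summable_B {k : ℝ} (hk : 0 < k) {r y : ℝ} (hr0 : 0 < r) (hr1 : r < 1)
    (hy : |y| ≤ r) : Summable (fun n : ℕ => (n : ℝ) * nbCoeff k n * y ^ (n - 1)) := by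
  apply Summable.of_norm_bounded (summable_nbCoeff_deriv hk hr0 hr1)
  intro n
  have hc := nbCoeff_pos hk n
  have hn : (0:ℝ) ≤ (n:ℝ) := Nat.cast_nonneg n
  rw [norm_mul, norm_mul, Real.norm_of_nonneg hn, Real.norm_of_nonneg hc.le, norm_pow,
    Real.norm_eq_abs]
  exact mul_le_mul_of_nonneg_left (pow_le_pow_left₀ (abs_nonneg y) hy _) (by positivity)

lemma summable_E {k : ℝ} (hk : 0 < k) {r y : ℝ} (hr0 : 0 < r) (hr1 : r < 1)
    (hy : |y| ≤ r) : Summable (fun n : ℕ => (n : ℝ) * nbCoeff k n * y ^ n) := by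
  have hB := (summable_B hk hr0 hr1 hy).mul_left y
  apply hB.congr
  intro n
  cases n with
  | zero => simp
  | succ n =>
    show y * (((n+1:ℕ):ℝ) * nbCoeff k (n+1) * y ^ (n + 1 - 1)) = _
    rw [Nat.add_sub_cancel, pow_succ]
    ring

lemma tsum_E_eq {k : ℝ} (hk : 0 < k) {r y : ℝ} (hr0 : 0 < r) (hr1 : r < 1) (hy : |y| ≤ r) :
    (∑' n : ℕ, (n : ℝ) * nbCoeff k n * y ^ n)
      = y * ∑' n : ℕ, (n : ℝ) * nbCoeff k n * y ^ (n - 1) := by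
  rw [← tsum_mul_left]
  apply tsum_congr
  intro n
  cases n with
  | zero => simp
  | succ n =>
    show _ = y * (((n+1:ℕ):ℝ) * nbCoeff k (n+1) * y ^ (n + 1 - 1))
    rw [Nat.add_sub_cancel, pow_succ]
    ring

/-- The ODE identity `(1 - y) * D y = k * g y`. -/
lemma deriv_identity {k : ℝ} (hk : 0 < k) {r y : ℝ} (hr0 : 0 < r) (hr1 : r < 1)
    (hy : |y| ≤ r) :
    (1 - y) * (∑' n : ℕ, (n : ℝ) * nbCoeff k n * y ^ (n - 1))
      = k * ∑' n : ℕ, nbCoeff k n * y ^ n := by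
  have SA := summable_A hk hr0 hr1 hy
  have SB := summable_B hk hr0 hr1 hy
  have SE := summable_E hk hr0 hr1 hy
  have hD : (∑' n : ℕ, (n : ℝ) * nbCoeff k n * y ^ (n - 1))
      = k * (∑' n : ℕ, nbCoeff k n * y ^ n) + ∑' n : ℕ, (n : ℝ) * nbCoeff k n * y ^ n := by
    rw [Summable.tsum_eq_zero_add SB]
    have hterm : ∀ n : ℕ, ((n+1:ℕ):ℝ) * nbCoeff k (n+1) * y ^ (n + 1 - 1)
        = k * (nbCoeff k n * y ^ n) + (n:ℝ) * nbCoeff k n * y ^ n := by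
      intro n
      rw [Nat.add_sub_cancel]
      have := nbCoeff_succ hk n
      push_cast
      calc ((n:ℝ) + 1) * nbCoeff k (n+1) * y ^ n = (((n:ℝ)+1) * nbCoeff k (n+1)) * y ^ n := by ring
        _ = ((k + n) * nbCoeff k n) * y ^ n := by rw [this]
        _ = _ := by ring
    simp only [hterm]
    rw [Summable.tsum_add (SA.mul_left k) SE, tsum_mul_left]
    simp
  have hE := tsum_E_eq hk hr0 hr1 hy
  set D := ∑' n : ℕ, (n : ℝ) * nbCoeff k n * y ^ (n - 1)
  set G := ∑' n : ℕ, nbCoeff k n * y ^ n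
  rw [hE] at hD
  linarith [hD]

theorem tsum_nbCoeff {k : ℝ} (hk : 0 < k) {z : ℝ} (h0 : 0 < z) (h1 : z < 1) :
    ∑' n : ℕ, nbCoeff k n * z ^ n = (1 - z) ^ (-k : ℝ) := by
  set r : ℝ := (1 + z) / 2 with hr
  have hr0 : 0 < r := by rw [hr]; linarith
  have hr1 : r < 1 := by rw [hr]; linarith
  have hzr : z < r := by rw [hr]; linarith
  set F : ℝ → ℝ := fun y => (∑' n : ℕ, nbCoeff k n * y ^ n) * (1 - y) ^ (k : ℝ) with hF
  have hFderiv : ∀ y ∈ Set.Ioo (-r) r, HasDerivAt F 0 y := by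
    intro y hy
    have hyr : |y| < r := abs_lt.2 ⟨hy.1, hy.2⟩
    have hy1 : y < 1 := lt_trans hy.2 hr1
    have h1y : (0:ℝ) < 1 - y := by linarith
    have hg : HasDerivAt (fun w => ∑' n : ℕ, nbCoeff k n * w ^ n)
        (∑' n : ℕ, (n : ℝ) * nbCoeff k n * y ^ (n - 1)) y := by
      have := hasDerivAt_tsum_of_isPreconnected
        (summable_nbCoeff_deriv hk hr0 hr1)
        (isOpen_Ioo : IsOpen (Set.Ioo (-r) r))
        (convex_Ioo (-r) r).isPreconnected
        (g := fun n w => nbCoeff k n * w ^ n)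
        (g' := fun n w => (n : ℝ) * nbCoeff k n * w ^ (n - 1))
        (fun n w _ => by
          have h := (hasDerivAt_pow n w).const_mul (nbCoeff k n)
          exact h.congr_deriv (by ring))
        (fun n w hw => by
          have hc := nbCoeff_pos hk n
          have hwr : |w| ≤ r := (abs_lt.2 ⟨hw.1, hw.2⟩).le
          have h1 : ‖(n:ℝ) * nbCoeff k n * w ^ (n-1)‖ = (n:ℝ) * nbCoeff k n * |w| ^ (n-1) := by
            rw [norm_mul, norm_mul, Real.norm_natCast, Real.norm_of_nonneg hc.le, norm_pow,
              Real.norm_eq_abs]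
          rw [h1]
          exact mul_le_mul_of_nonneg_left (pow_le_pow_left₀ (abs_nonneg w) hwr _)
            (by positivity))
        (Set.mem_Ioo.2 ⟨by linarith, hzr⟩)
        (summable_nbCoeff hk h0 h1)
        hy
      exact this
    have hrpow : HasDerivAt (fun w : ℝ => (1 - w) ^ (k : ℝ))
        (-1 * k * (1 - y) ^ (k - 1)) y := by
      have h : HasDerivAt (fun w : ℝ => 1 - w) (-1) y := by
        simpa using (hasDerivAt_id y).const_sub 1
      exact h.rpow_const (Or.inl (ne_of_gt h1y))
    have hmul := hg.mul hrpow
    refine hmul.congr_deriv ?_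
    have hid := deriv_identity hk hr0 hr1 hyr.le
    have hsplit : (1 - y) ^ (k : ℝ) = (1 - y) ^ (k - 1 : ℝ) * (1 - y) := by
      rw [← Real.rpow_add_one (ne_of_gt h1y) (k - 1)]
      ring_nf
    set D := ∑' n : ℕ, (n : ℝ) * nbCoeff k n * y ^ (n - 1)
    set G := ∑' n : ℕ, nbCoeff k n * y ^ n
    rw [hsplit]
    linear_combination ((1 - y) ^ (k - 1 : ℝ)) * hid
  have hzIoo : ∀ x ∈ Set.Icc (0:ℝ) z, x ∈ Set.Ioo (-r) r := by
    intro x hx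
    exact Set.mem_Ioo.2 ⟨by linarith [hx.1], lt_of_le_of_lt hx.2 hzr⟩
  have hconst := constant_of_has_deriv_right_zero
    (f := F) (a := 0) (b := z)
    (fun x hx => (hFderiv x (hzIoo x hx)).continuousAt.continuousWithinAt)
    (fun x hx => ((hFderiv x (hzIoo x ⟨hx.1, hx.2.le⟩)).hasDerivWithinAt))
  have hFz := hconst z (Set.mem_Icc.2 ⟨h0.le, le_refl z⟩)
  have hF0 : F 0 = 1 := by
    rw [hF]
    simp only
    have : (∑' n : ℕ, nbCoeff k n * (0:ℝ) ^ n) = 1 := by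
      rw [tsum_eq_single 0]
      · simp [nbCoeff_zero hk]
      · intro n hn
        simp [zero_pow hn]
    rw [this]
    simp
  rw [hF0] at hFz
  have h1z : (0:ℝ) < 1 - z := by linarith
  have hrpos : (0:ℝ) < (1 - z) ^ (k : ℝ) := Real.rpow_pos_of_pos h1z k
  have : (∑' n : ℕ, nbCoeff k n * z ^ n) = ((1 - z) ^ (k : ℝ))⁻¹ := by
    have := eq_div_of_mul_eq (ne_of_gt hrpos) hFz
    rw [this, one_div]
  rw [this, ← Real.rpow_neg h1z.le]

theorem tsum_nbCoeff_mul {k : ℝ} (hk : 0 < k) {z : ℝ} (h0 : 0 < z) (h1 : z < 1) :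
    ∑' n : ℕ, (n : ℝ) * nbCoeff k n * z ^ n = k * z * (1 - z) ^ (-k - 1 : ℝ) := by
  set r : ℝ := (1 + z) / 2 with hr
  have hr0 : 0 < r := by rw [hr]; linarith
  have hr1 : r < 1 := by rw [hr]; linarith
  have hzr : |z| ≤ r := by rw [abs_of_pos h0, hr]; linarith
  have h1z : (0:ℝ) < 1 - z := by linarith
  have hid := deriv_identity hk hr0 hr1 hzr
  have hg := tsum_nbCoeff hk h0 h1
  have hE := tsum_E_eq hk hr0 hr1 hzr
  rw [hg] at hid
  have hD : (∑' n : ℕ, (n : ℝ) * nbCoeff k n * z ^ (n - 1))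
      = k * (1 - z) ^ (-k - 1 : ℝ) := by
    have hsplit : (1 - z) ^ (-k : ℝ) = (1 - z) ^ (-k - 1 : ℝ) * (1 - z) := by
      rw [← Real.rpow_add_one (ne_of_gt h1z) (-k - 1)]
      ring_nf
    rw [hsplit] at hid
    have h2 : (1 - z) * (∑' n : ℕ, (n : ℝ) * nbCoeff k n * z ^ (n - 1))
        = (1 - z) * (k * (1 - z) ^ (-k - 1 : ℝ)) := by rw [hid]; ring
    exact mul_left_cancel₀ (ne_of_gt h1z) h2
  rw [hE, hD]
  ring

/-- Probability mass function of the negative binomial distribution with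
shape `k > 0` and mean `m > 0`. -/
noncomputable def nbPmf (k m : ℝ) (x : ℕ) : ℝ :=
  Real.Gamma (k + x) / (Real.Gamma k * (Nat.factorial x : ℝ)) *
    (k / (k + m)) ^ (k : ℝ) * (m / (k + m)) ^ x

lemma nbPmf_eq (k m : ℝ) (x : ℕ) :
    nbPmf k m x = nbCoeff k x * (k / (k + m)) ^ (k : ℝ) * (m / (k + m)) ^ x := rfl

section PmfFacts

variable {k m : ℝ} (hk : 0 < k) (hm : 0 < m)
include hk hm

lemma hz0 : 0 < m / (k + m) := div_pos hm (by linarith)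
lemma hz1 : m / (k + m) < 1 := by
  rw [div_lt_one (by linarith)]; linarith

lemma ha0 : 0 < k / (k + m) := div_pos hk (by linarith)

lemma one_sub_z : 1 - m / (k + m) = k / (k + m) := by
  have : k + m ≠ 0 := by positivity
  field_simp
  ring

lemma nbPmf_pos (x : ℕ) : 0 < nbPmf k m x := by
  rw [nbPmf_eq]
  have h1 := nbCoeff_pos hk x
  have h2 : (0:ℝ) < (k / (k + m)) ^ (k : ℝ) := Real.rpow_pos_of_pos (ha0 hk hm) k
  have h3 : (0:ℝ) < (m / (k + m)) ^ x := pow_pos (hz0 hk hm) x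
  exact mul_pos (mul_pos h1 h2) h3

lemma summable_nbPmf : Summable (fun x : ℕ => nbPmf k m x) := by
  have := (summable_nbCoeff hk (hz0 hk hm) (hz1 hk hm)).mul_right ((k / (k + m)) ^ (k : ℝ))
  apply this.congr
  intro n
  rw [nbPmf_eq]
  ring

lemma summable_mul_nbPmf : Summable (fun x : ℕ => (x : ℝ) * nbPmf k m x) := by
  have := (summable_E hk (hz0 hk hm) (hz1 hk hm) (by
    rw [abs_of_pos (hz0 hk hm)])).mul_right ((k / (k + m)) ^ (k : ℝ))
  apply this.congr
  intro n
  rw [nbPmf_eq]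
  ring

lemma tsum_nbPmf : ∑' x : ℕ, nbPmf k m x = 1 := by
  have h1 : ∑' x : ℕ, nbPmf k m x
      = (∑' x : ℕ, nbCoeff k x * (m / (k + m)) ^ x) * (k / (k + m)) ^ (k : ℝ) := by
    rw [← tsum_mul_right]
    apply tsum_congr
    intro n
    rw [nbPmf_eq]; ring
  rw [h1, tsum_nbCoeff hk (hz0 hk hm) (hz1 hk hm), one_sub_z hk hm,
    Real.rpow_neg (ha0 hk hm).le]
  exact inv_mul_cancel₀ (ne_of_gt (Real.rpow_pos_of_pos (ha0 hk hm) k))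

lemma tsum_mul_nbPmf : ∑' x : ℕ, (x : ℝ) * nbPmf k m x = m := by
  have h1 : ∑' x : ℕ, (x : ℝ) * nbPmf k m x
      = (∑' x : ℕ, (x:ℝ) * nbCoeff k x * (m / (k + m)) ^ x) * (k / (k + m)) ^ (k : ℝ) := by
    rw [← tsum_mul_right]
    apply tsum_congr
    intro n
    rw [nbPmf_eq]; ring
  rw [h1, tsum_nbCoeff_mul hk (hz0 hk hm) (hz1 hk hm), one_sub_z hk hm]
  have ha := ha0 hk hm (k := k)
  have h2 : (k / (k+m)) ^ (-k - 1 : ℝ) * (k / (k+m)) ^ (k : ℝ) = (k / (k+m))⁻¹ := by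
    rw [← Real.rpow_add ha, ← Real.rpow_neg_one (k / (k+m))]
    congr 1
    ring
  have h3 : k * (m / (k + m)) * ((k / (k+m)) ^ (-k - 1 : ℝ) * (k / (k+m)) ^ (k : ℝ)) = m := by
    rw [h2]
    field_simp
  calc k * (m / (k + m)) * (k / (k+m)) ^ (-k - 1 : ℝ) * (k / (k+m)) ^ (k : ℝ)
      = k * (m / (k + m)) * ((k / (k+m)) ^ (-k - 1 : ℝ) * (k / (k+m)) ^ (k : ℝ)) := by ring
    _ = m := h3

lemma nbPmf_succ (x : ℕ) :
    nbPmf k m (x + 1) = nbPmf k m x * ((k + x) / ((x : ℝ) + 1)) * (m / (k + m)) := by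
  rw [nbPmf_eq, nbPmf_eq]
  have hrec := nbCoeff_succ hk x
  have hx1 : ((x:ℝ) + 1) ≠ 0 := by positivity
  have hc : nbCoeff k (x+1) = (k + x) * nbCoeff k x / ((x:ℝ) + 1) := by
    field_simp at hrec ⊢
    linarith [hrec]
  rw [hc, pow_succ]
  ring

end PmfFacts

section Chord

variable {φ : ℝ → ℝ}

lemma chord_le (hφ : ConvexOn ℝ Set.univ φ) {c d z : ℝ} (hcz : c ≤ z) (hzd : z ≤ d)
    (hcd : c < d) : φ z ≤ φ c + (φ d - φ c) / (d - c) * (z - c) := by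
  have hdc : (0:ℝ) < d - c := by linarith
  have ha : 0 ≤ (d - z) / (d - c) := div_nonneg (by linarith) hdc.le
  have hb : 0 ≤ (z - c) / (d - c) := div_nonneg (by linarith) hdc.le
  have hab : (d - z) / (d - c) + (z - c) / (d - c) = 1 := by
    field_simp
    ring
  have h := hφ.2 (Set.mem_univ c) (Set.mem_univ d) ha hb hab
  have hcomb : ((d - z) / (d - c)) • c + ((z - c) / (d - c)) • d = z := by
    simp only [smul_eq_mul]
    field_simp
    ring
  rw [hcomb] at h
  refine h.trans (le_of_eq ?_)
  simp only [smul_eq_mul]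
  field_simp
  ring

lemma chord_ge_right (hφ : ConvexOn ℝ Set.univ φ) {c d z : ℝ} (hcd : c < d) (hdz : d ≤ z) :
    φ c + (φ d - φ c) / (d - c) * (z - c) ≤ φ z := by
  have hdc : (0:ℝ) < d - c := by linarith
  rcases eq_or_lt_of_le hdz with h | h
  · rw [← h, div_mul_cancel₀ _ (ne_of_gt hdc)]
    linarith
  · have hsl := hφ.slope_mono_adjacent (Set.mem_univ c) (Set.mem_univ z) hcd h
    have hzd : (0:ℝ) < z - d := by linarith
    have key : (φ d - φ c) * (z - d) ≤ (φ z - φ d) * (d - c) := by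
      rw [div_le_div_iff₀ hdc hzd] at hsl
      linarith [hsl]
    rw [add_comm, ← le_sub_iff_add_le, div_mul_eq_mul_div, div_le_iff₀ hdc]
    nlinarith [key]

lemma chord_ge_left (hφ : ConvexOn ℝ Set.univ φ) {c d z : ℝ} (hcd : c < d) (hzc : z ≤ c) :
    φ c + (φ d - φ c) / (d - c) * (z - c) ≤ φ z := by
  have hdc : (0:ℝ) < d - c := by linarith
  rcases eq_or_lt_of_le hzc with h | h
  · rw [h]
    simp
  · have hsl := hφ.slope_mono_adjacent (Set.mem_univ z) (Set.mem_univ d) h hcd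
    have hcz : (0:ℝ) < c - z := by linarith
    have key : (φ c - φ z) * (d - c) ≤ (φ d - φ c) * (c - z) := by
      rw [div_le_div_iff₀ hcz hdc] at hsl
      linarith [hsl]
    rw [add_comm, ← le_sub_iff_add_le, div_mul_eq_mul_div, div_le_iff₀ hdc]
    nlinarith [key]

end Chord

section Ratio

variable {m k₁ k₂ : ℝ} (hm : 0 < m) (hk₁ : 0 < k₁) (hk₂ : 0 < k₂) (hk : k₁ < k₂)

/-- Likelihood ratio of the two negative binomial pmfs. -/
noncomputable def nbW (m k₁ k₂ : ℝ) (x : ℕ) : ℝ := nbPmf k₂ m x / nbPmf k₁ m x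

include hm hk₁ hk₂

lemma nbW_pos (x : ℕ) : 0 < nbW m k₁ k₂ x :=
  div_pos (nbPmf_pos hk₂ hm x) (nbPmf_pos hk₁ hm x)

lemma nbW_succ (x : ℕ) :
    nbW m k₁ k₂ (x + 1)
      = nbW m k₁ k₂ x * (((k₂ + x) * (k₁ + m)) / ((k₁ + x) * (k₂ + m))) := by
  have hp := nbPmf_pos hk₁ hm x
  have hq := nbPmf_pos hk₂ hm x
  have h1 : ((x:ℝ) + 1) ≠ 0 := by positivity
  have h2 : (k₁ + m) ≠ 0 := by positivity
  have h3 : (k₂ + m) ≠ 0 := by positivity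
  have h4 : (k₁ + (x:ℝ)) ≠ 0 := by positivity
  have h5 : (k₂ + (x:ℝ)) ≠ 0 := by positivity
  rw [nbW, nbW, nbPmf_succ hk₂ hm, nbPmf_succ hk₁ hm]
  field_simp

lemma nbW_step_up (x : ℕ) (hx : (x:ℝ) ≤ m) (hkk : k₁ < k₂) :
    nbW m k₁ k₂ x ≤ nbW m k₁ k₂ (x + 1) := by
  rw [nbW_succ hm hk₁ hk₂]
  have hW := nbW_pos hm hk₁ hk₂ (x := x)
  have hden : (0:ℝ) < (k₁ + x) * (k₂ + m) := by positivity
  have hnum : (k₁ + (x:ℝ)) * (k₂ + m) ≤ (k₂ + x) * (k₁ + m) := by nlinarith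
  have hfac : (1:ℝ) ≤ ((k₂ + x) * (k₁ + m)) / ((k₁ + x) * (k₂ + m)) :=
    (one_le_div hden).2 hnum
  nlinarith

lemma nbW_step_down (x : ℕ) (hx : m ≤ (x:ℝ)) (hkk : k₁ < k₂) :
    nbW m k₁ k₂ (x + 1) ≤ nbW m k₁ k₂ x := by
  rw [nbW_succ hm hk₁ hk₂]
  have hW := nbW_pos hm hk₁ hk₂ (x := x)
  have hden : (0:ℝ) < (k₁ + x) * (k₂ + m) := by positivity
  have hnum : (k₂ + (x:ℝ)) * (k₁ + m) ≤ (k₁ + x) * (k₂ + m) := by nlinarith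
  have hfac : ((k₂ + x) * (k₁ + m)) / ((k₁ + x) * (k₂ + m)) ≤ 1 :=
    (div_le_one hden).2 hnum
  nlinarith

lemma nbW_mono_left (hkk : k₁ < k₂) (a : ℕ) :
    ∀ b : ℕ, a ≤ b → ((b:ℝ) ≤ m + 1) → nbW m k₁ k₂ a ≤ nbW m k₁ k₂ b := by
  intro b hab
  induction b, hab using Nat.le_induction with
  | base => intro _; exact le_refl _
  | succ b hb' ih =>
    intro hb1
    push_cast at hb1
    have hbm : (b:ℝ) ≤ m := by linarith
    exact le_trans (ih (by linarith)) (nbW_step_up hm hk₁ hk₂ b hbm hkk)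

lemma nbW_anti_right (hkk : k₁ < k₂) (a : ℕ) (ha : m ≤ (a:ℝ)) :
    ∀ b : ℕ, a ≤ b → nbW m k₁ k₂ b ≤ nbW m k₁ k₂ a := by
  intro b hab
  induction b, hab using Nat.le_induction with
  | base => exact le_refl _
  | succ b hb' ih =>
    have hmb : m ≤ (b:ℝ) := le_trans ha (by exact_mod_cast hb')
    exact le_trans (nbW_step_down hm hk₁ hk₂ b hmb hkk) ih

lemma nbW_eventually_lt_one (hkk : k₁ < k₂) :
    ∃ N : ℕ, m ≤ (N:ℝ) ∧ ∀ x : ℕ, N ≤ x → nbW m k₁ k₂ x < 1 := by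
  set a : ℕ := ⌈m⌉₊ + 1 with hadef
  have ham : m < (a:ℝ) := by
    have h1 := Nat.le_ceil m
    have h2 : ((⌈m⌉₊ : ℕ) : ℝ) < ((a : ℕ) : ℝ) := by
      rw [hadef]; push_cast; linarith
    linarith
  set ρ : ℝ := ((k₂ + a) * (k₁ + m)) / ((k₁ + a) * (k₂ + m)) with hρdef
  have hden : (0:ℝ) < (k₁ + a) * (k₂ + m) := by positivity
  have hρ0 : 0 < ρ := by
    apply div_pos _ hden
    positivity
  have hρ1 : ρ < 1 := by
    rw [hρdef, div_lt_one hden]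
    nlinarith
  have hfb : ∀ x : ℕ, a ≤ x →
      ((k₂ + x) * (k₁ + m)) / ((k₁ + x) * (k₂ + m)) ≤ ρ := by
    intro x hx
    have hxa : (a:ℝ) ≤ x := by exact_mod_cast hx
    have hdenx : (0:ℝ) < (k₁ + x) * (k₂ + m) := by positivity
    rw [hρdef, div_le_div_iff₀ hdenx hden]
    have key : (k₂ + (x:ℝ)) * (k₁ + a) ≤ (k₂ + a) * (k₁ + x) := by nlinarith
    nlinarith [mul_le_mul_of_nonneg_right key (le_of_lt (mul_pos (by positivity : (0:ℝ) < k₁ + m) (by positivity : (0:ℝ) < k₂ + m)))]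
  have decay : ∀ n : ℕ, nbW m k₁ k₂ (a + n) ≤ nbW m k₁ k₂ a * ρ ^ n := by
    intro n
    induction n with
    | zero => simp
    | succ n ih =>
      have hstep := nbW_succ hm hk₁ hk₂ (x := a + n)
      have hfbn := hfb (a + n) (Nat.le_add_right a n)
      have hWpos := nbW_pos hm hk₁ hk₂ (x := a + n)
      have hfnonneg : (0:ℝ) ≤ ((k₂ + (a+n:ℕ)) * (k₁ + m)) / ((k₁ + (a+n:ℕ)) * (k₂ + m)) := by
        positivity
      calc nbW m k₁ k₂ (a + (n+1)) = nbW m k₁ k₂ ((a + n) + 1) := by ring_nf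
        _ = nbW m k₁ k₂ (a + n) * (((k₂ + (a+n:ℕ)) * (k₁ + m)) / ((k₁ + (a+n:ℕ)) * (k₂ + m))) := hstep
        _ ≤ (nbW m k₁ k₂ a * ρ ^ n) * ρ := by
            apply mul_le_mul ih hfbn hfnonneg
            exact mul_nonneg (nbW_pos hm hk₁ hk₂ (x := a)).le (pow_nonneg hρ0.le n)
        _ = nbW m k₁ k₂ a * ρ ^ (n + 1) := by rw [pow_succ]; ring
  have hWa := nbW_pos hm hk₁ hk₂ (x := a)
  obtain ⟨n₀, hn₀⟩ := exists_pow_lt_of_lt_one (inv_pos.2 hWa) hρ1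
  refine ⟨a + n₀, ?_, ?_⟩
  · have : (a:ℝ) ≤ (a + n₀ : ℕ) := by push_cast; linarith [Nat.cast_nonneg (α := ℝ) n₀]
    linarith
  · intro x hx
    have h1 : nbW m k₁ k₂ x ≤ nbW m k₁ k₂ (a + n₀) :=
      nbW_anti_right hm hk₁ hk₂ hkk (a + n₀) (by
        have : (a:ℝ) ≤ (a + n₀ : ℕ) := by push_cast; linarith [Nat.cast_nonneg (α := ℝ) n₀]
        linarith) x hx
    have h2 : nbW m k₁ k₂ (a + n₀) ≤ nbW m k₁ k₂ a * ρ ^ n₀ := decay n₀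
    have h3 : nbW m k₁ k₂ a * ρ ^ n₀ < 1 := by
      have := mul_lt_mul_of_pos_left hn₀ hWa
      rwa [mul_inv_cancel₀ (ne_of_gt hWa)] at this
    linarith

end Ratio

set_option maxHeartbeats 1600000 in
/-- The negative binomial distribution decreases in the Lorenz order as `k`
increases (convex-order formulation). -/
theorem nb_lorenz_decreasing_in_k (m k₁ k₂ : ℝ) (hm : 0 < m)
    (hk₁ : 0 < k₁) (hk : k₁ < k₂) (φ : ℝ → ℝ) (hφ : ConvexOn ℝ Set.univ φ)
    (h₁ : Summable (fun x : ℕ => φ ((x : ℝ) / m) * nbPmf k₁ m x))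
    (h₂ : Summable (fun x : ℕ => φ ((x : ℝ) / m) * nbPmf k₂ m x)) :
    ∑' x : ℕ, φ ((x : ℝ) / m) * nbPmf k₂ m x ≤
      ∑' x : ℕ, φ ((x : ℝ) / m) * nbPmf k₁ m x := by
  have hk₂ : 0 < k₂ := lt_trans hk₁ hk
  set p : ℕ → ℝ := nbPmf k₁ m with hpdef
  set q : ℕ → ℝ := nbPmf k₂ m with hqdef
  have hp : ∀ x, 0 < p x := nbPmf_pos hk₁ hm
  have hq : ∀ x, 0 < q x := nbPmf_pos hk₂ hm
  have s1 : Summable p := summable_nbPmf hk₁ hm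
  have s2 : Summable q := summable_nbPmf hk₂ hm
  have s3 : Summable (fun x : ℕ => (x:ℝ) * p x) := summable_mul_nbPmf hk₁ hm
  have s4 : Summable (fun x : ℕ => (x:ℝ) * q x) := summable_mul_nbPmf hk₂ hm
  have tp : ∑' x : ℕ, p x = 1 := tsum_nbPmf hk₁ hm
  have tq : ∑' x : ℕ, q x = 1 := tsum_nbPmf hk₂ hm
  have mp : ∑' x : ℕ, (x:ℝ) * p x = m := tsum_mul_nbPmf hk₁ hm
  have mq : ∑' x : ℕ, (x:ℝ) * q x = m := tsum_mul_nbPmf hk₂ hm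
  set A : Set ℕ := {x | p x < q x} with hAdef
  by_cases hA : A.Nonempty
  · -- the two pmfs cross twice
    obtain ⟨N, hNm, hN⟩ := nbW_eventually_lt_one hm hk₁ hk₂ hk
    have hmemW : ∀ x : ℕ, x ∈ A ↔ 1 < nbW m k₁ k₂ x := by
      intro x
      rw [hAdef, Set.mem_setOf_eq, nbW, one_lt_div (hp x)]
    have hbdd : BddAbove A := by
      refine ⟨N, fun x hx => ?_⟩
      by_contra hcon
      push_neg at hcon
      have hlt := hN x hcon.le
      have := (hmemW x).1 hx
      linarith
    set n₁ : ℕ := sInf A with hn₁def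
    set n₂ : ℕ := sSup A with hn₂def
    have hn₁ : n₁ ∈ A := Nat.sInf_mem hA
    have hn₂ : n₂ ∈ A := Nat.sSup_mem hA hbdd
    have hn₁₂ : n₁ ≤ n₂ := Nat.sInf_le hn₂
    have hint : ∀ x : ℕ, n₁ ≤ x → x ≤ n₂ → p x < q x := by
      intro x ha hb
      rcases le_total (x:ℝ) m with hxm | hmx
      · have hle := nbW_mono_left hm hk₁ hk₂ hk n₁ x ha (by linarith)
        have h1 : 1 < nbW m k₁ k₂ n₁ := (hmemW n₁).1 hn₁
        exact (hmemW x).2 (lt_of_lt_of_le h1 hle)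
      · have hle := nbW_anti_right hm hk₁ hk₂ hk x hmx n₂ hb
        have h1 : 1 < nbW m k₁ k₂ n₂ := (hmemW n₂).1 hn₂
        exact (hmemW x).2 (lt_of_lt_of_le h1 hle)
    set c : ℝ := ((n₁:ℝ) - 2⁻¹) / m with hcdef
    set d : ℝ := ((n₂:ℝ) + 2⁻¹) / m with hddef
    have hn₁₂R : (n₁:ℝ) ≤ (n₂:ℝ) := by exact_mod_cast hn₁₂
    have hcd : c < d := by
      rw [hcdef, hddef, div_lt_div_iff₀ hm hm]
      nlinarith
    have hterm : ∀ x : ℕ,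
        0 ≤ (φ ((x:ℝ)/m) - (φ c + (φ d - φ c) / (d - c) * ((x:ℝ)/m - c))) * (p x - q x) := by
      intro x
      rcases lt_or_ge x n₁ with hx1 | hx1
      · have hxA : x ∉ A := Nat.notMem_of_lt_sInf hx1
        have hD : 0 ≤ p x - q x := by
          rw [hAdef, Set.mem_setOf_eq] at hxA
          push_neg at hxA
          linarith
        have hxc : (x:ℝ) ≤ (n₁:ℝ) - 1 := by
          have : (x:ℕ) + 1 ≤ n₁ := hx1
          have := (Nat.cast_le (α := ℝ)).2 this
          push_cast at this
          linarith
        have hz : (x:ℝ)/m ≤ c := by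
          rw [hcdef, div_le_div_iff₀ hm hm]
          nlinarith
        exact mul_nonneg (sub_nonneg.2 (chord_ge_left hφ hcd hz)) hD
      · rcases le_or_gt x n₂ with hx2 | hx2
        · have hpq := hint x hx1 hx2
          have hx1R : (n₁:ℝ) ≤ (x:ℝ) := by exact_mod_cast hx1
          have hx2R : (x:ℝ) ≤ (n₂:ℝ) := by exact_mod_cast hx2
          have hz1 : c ≤ (x:ℝ)/m := by
            rw [hcdef, div_le_div_iff₀ hm hm]
            nlinarith
          have hz2 : (x:ℝ)/m ≤ d := by
            rw [hddef, div_le_div_iff₀ hm hm]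
            nlinarith
          have := mul_nonneg (neg_nonneg.2 (sub_nonpos.2 (chord_le hφ hz1 hz2 hcd)))
            (neg_nonneg.2 (by linarith : p x - q x ≤ 0))
          nlinarith [this]
        · have hxA : x ∉ A := fun hmem => absurd (le_csSup hbdd hmem) (not_le.2 hx2)
          have hD : 0 ≤ p x - q x := by
            rw [hAdef, Set.mem_setOf_eq] at hxA
            push_neg at hxA
            linarith
          have hxc : (n₂:ℝ) + 1 ≤ (x:ℝ) := by
            have : n₂ + 1 ≤ x := hx2
            exact_mod_cast this
          have hz : d ≤ (x:ℝ)/m := by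
            rw [hddef, div_le_div_iff₀ hm hm]
            nlinarith
          exact mul_nonneg (sub_nonneg.2 (chord_ge_right hφ hcd hz)) hD
    -- rewrite the summand as a linear combination of summable pieces
    have hfun : (fun x : ℕ =>
          (φ ((x:ℝ)/m) - (φ c + (φ d - φ c) / (d - c) * ((x:ℝ)/m - c))) * (p x - q x))
        = fun x : ℕ =>
          ((φ ((x:ℝ)/m) * p x - φ ((x:ℝ)/m) * q x)
            - ((φ c - (φ d - φ c) / (d - c) * c) * p x - (φ c - (φ d - φ c) / (d - c) * c) * q x))
            - (((φ d - φ c) / (d - c) / m) * ((x:ℝ) * p x)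
              - ((φ d - φ c) / (d - c) / m) * ((x:ℝ) * q x)) := by
      funext x
      ring
    have sαp : Summable (fun x : ℕ => (φ c - (φ d - φ c) / (d - c) * c) * p x) :=
      s1.mul_left _
    have sαq : Summable (fun x : ℕ => (φ c - (φ d - φ c) / (d - c) * c) * q x) :=
      s2.mul_left _
    have sβp : Summable (fun x : ℕ => ((φ d - φ c) / (d - c) / m) * ((x:ℝ) * p x)) :=
      s3.mul_left _
    have sβq : Summable (fun x : ℕ => ((φ d - φ c) / (d - c) / m) * ((x:ℝ) * q x)) :=
      s4.mul_left _
    have hT : 0 ≤ ∑' x : ℕ,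
        (φ ((x:ℝ)/m) - (φ c + (φ d - φ c) / (d - c) * ((x:ℝ)/m - c))) * (p x - q x) :=
      tsum_nonneg hterm
    have hTeq : ∑' x : ℕ,
        (φ ((x:ℝ)/m) - (φ c + (φ d - φ c) / (d - c) * ((x:ℝ)/m - c))) * (p x - q x)
        = (∑' x : ℕ, φ ((x:ℝ)/m) * p x) - ∑' x : ℕ, φ ((x:ℝ)/m) * q x := by
      rw [hfun]
      rw [Summable.tsum_sub ((h₁.sub h₂).sub (sαp.sub sαq)) (sβp.sub sβq),
        Summable.tsum_sub (h₁.sub h₂) (sαp.sub sαq), Summable.tsum_sub h₁ h₂, Summable.tsum_sub sαp sαq,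
        Summable.tsum_sub sβp sβq, tsum_mul_left, tsum_mul_left, tsum_mul_left, tsum_mul_left,
        tp, tq, mp, mq]
      ring
    rw [hTeq] at hT
    linarith
  · -- no crossing: the pmfs agree
    have hqp : ∀ x, q x ≤ p x := by
      intro x
      by_contra hcon
      push_neg at hcon
      exact hA ⟨x, hcon⟩
    have hDt : ∑' x : ℕ, (p x - q x) = 0 := by
      rw [Summable.tsum_sub s1 s2, tp, tq]
      ring
    have hpq : ∀ x, p x = q x := by
      intro x
      have h1 : p x - q x ≤ ∑' y : ℕ, (p y - q y) :=
        Summable.le_tsum (s1.sub s2) x (fun j _ => sub_nonneg.2 (hqp j))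
      have h2 : 0 ≤ p x - q x := sub_nonneg.2 (hqp x)
      rw [hDt] at h1
      linarith
    exact le_of_eq (tsum_congr fun x => by rw [hpq x])
end

section
/- Two sign changes of the difference of equal-mean gamma densities: let m > 0 and 0 < k₁ < k₂, and let g_i(x) = ((k_i/m)^{k_i}/Γ(k_i)) · x^{k_i−1} · e^{−(k_i/m)x} for x > 0 be the density of Gamma(k_i, k_i/m). Then there exist real numbers 0 < a < b such that g₂(x) < g₁(x) for all x ∈ (0,a), g₂(x) > g₁(x) for all x ∈ (a,b), and g₂(x) < g₁(x) for all x ∈ (b,∞); i.e., g₂ − g₁ exhibits exactly two sign changes, in the sign sequence −, +, −. -/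
/-- Probability density of the Gamma distribution with shape `a > 0` and rate
`b > 0`: `g(x) = (b^a/Γ(a)) · x^{a-1} · e^{-bx}` for `x > 0`. -/
noncomputable def gammaPdf (a b x : ℝ) : ℝ :=
  b ^ (a : ℝ) / Real.Gamma a * x ^ (a - 1 : ℝ) * Real.exp (-b * x)

open Real Set

lemma gammaPdf_pos {a b x : ℝ} (ha : 0 < a) (hb : 0 < b) (hx : 0 < x) :
    0 < gammaPdf a b x :=
  mul_pos (mul_pos (div_pos (rpow_pos_of_pos hb a) (Gamma_pos_of_pos ha))
    (rpow_pos_of_pos hx _)) (exp_pos _)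

lemma log_gammaPdf {a b x : ℝ} (ha : 0 < a) (hb : 0 < b) (hx : 0 < x) :
    Real.log (gammaPdf a b x)
      = a * Real.log b - Real.log (Real.Gamma a) + (a - 1) * Real.log x - b * x := by
  unfold gammaPdf
  rw [log_mul (by positivity) (exp_ne_zero _), log_mul (by positivity) (by positivity),
    log_div (by positivity) (ne_of_gt (Gamma_pos_of_pos ha)),
    log_rpow hb, log_rpow hx, log_exp]
  ring

/-- `F k = k log k - k - log Γ(k)`. -/
noncomputable def Fgam (k : ℝ) : ℝ := k * Real.log k - k - Real.log (Real.Gamma k)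

lemma logGamma_sub_le {k₁ k₂ : ℝ} (h1 : 0 < k₁) (h2 : k₁ < k₂) (h3 : k₂ ≤ k₁ + 1) :
    Real.log (Real.Gamma k₂) - Real.log (Real.Gamma k₁) ≤ (k₂ - k₁) * Real.log k₁ := by
  have hs := convexOn_log_Gamma.secant_mono (a := k₁) (x := k₂) (y := k₁ + 1)
    (mem_Ioi.mpr h1) (mem_Ioi.mpr (h1.trans h2)) (mem_Ioi.mpr (by linarith))
    (ne_of_gt h2) (by linarith) h3
  have hΓ : Real.Gamma (k₁ + 1) = k₁ * Real.Gamma k₁ := Real.Gamma_add_one (ne_of_gt h1)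
  have hlog : (Real.log ∘ Real.Gamma) (k₁ + 1) - (Real.log ∘ Real.Gamma) k₁ = Real.log k₁ := by
    simp only [Function.comp_apply, hΓ,
      log_mul (ne_of_gt h1) (ne_of_gt (Gamma_pos_of_pos h1))]
    ring
  have hd : (0:ℝ) < k₂ - k₁ := by linarith
  rw [div_le_iff₀ hd] at hs
  calc Real.log (Real.Gamma k₂) - Real.log (Real.Gamma k₁)
      = (Real.log ∘ Real.Gamma) k₂ - (Real.log ∘ Real.Gamma) k₁ := rfl
    _ ≤ ((Real.log ∘ Real.Gamma) (k₁ + 1) - (Real.log ∘ Real.Gamma) k₁) / (k₁ + 1 - k₁)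
          * (k₂ - k₁) := hs
    _ = (k₂ - k₁) * Real.log k₁ := by rw [hlog]; ring

lemma Fgam_lt_step {k₁ k₂ : ℝ} (h1 : 0 < k₁) (h2 : k₁ < k₂) (h3 : k₂ ≤ k₁ + 1) :
    Fgam k₁ < Fgam k₂ := by
  have h2' : 0 < k₂ := h1.trans h2
  have hG := logGamma_sub_le h1 h2 h3
  -- strict inequality: k₂ (log k₂ - log k₁) > k₂ - k₁
  have hq : Real.log (k₁ / k₂) < k₁ / k₂ - 1 :=
    log_lt_sub_one_of_pos (by positivity) (by
      intro h
      have : k₁ = k₂ := by field_simp at h; linarith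
      linarith)
  rw [log_div (ne_of_gt h1) (ne_of_gt h2')] at hq
  have hmul : k₂ * (Real.log k₁ - Real.log k₂) < k₂ * (k₁ / k₂ - 1) := by
    exact (mul_lt_mul_iff_right₀ h2').mpr hq
  have hmul' : k₂ * (k₁ / k₂ - 1) = k₁ - k₂ := by field_simp
  rw [hmul'] at hmul
  unfold Fgam
  nlinarith [hmul, hG]

lemma Fgam_strictMono {k₁ k₂ : ℝ} (h1 : 0 < k₁) (h2 : k₁ < k₂) : Fgam k₁ < Fgam k₂ := by
  obtain ⟨n, hn⟩ := exists_nat_ge (k₂ - k₁)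
  induction n generalizing k₁ with
  | zero => simp at hn; linarith
  | succ n ih =>
    by_cases h : k₂ ≤ k₁ + 1
    · exact Fgam_lt_step h1 h2 h
    · push_neg at h
      exact (Fgam_lt_step h1 (lt_add_one k₁) le_rfl).trans
        (ih (by linarith) (by linarith) (by push_cast at hn ⊢; linarith))

/-- The difference of two equal-mean gamma densities (shape `k₂ > k₁`) exhibits
exactly two sign changes, in the sign sequence −, +, −. -/
theorem gamma_density_two_sign_changes (m k₁ k₂ : ℝ) (hm : 0 < m)
    (hk₁ : 0 < k₁) (hk : k₁ < k₂) :
    ∃ a b : ℝ, 0 < a ∧ a < b ∧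
      (∀ x ∈ Set.Ioo (0 : ℝ) a, gammaPdf k₂ (k₂ / m) x < gammaPdf k₁ (k₁ / m) x) ∧
      (∀ x ∈ Set.Ioo a b, gammaPdf k₁ (k₁ / m) x < gammaPdf k₂ (k₂ / m) x) ∧
      (∀ x ∈ Set.Ioi b, gammaPdf k₂ (k₂ / m) x < gammaPdf k₁ (k₁ / m) x) := by
  have hk₂ : 0 < k₂ := hk₁.trans hk
  have hD : (0:ℝ) < k₂ - k₁ := by linarith
  set c : ℝ := ((k₂ * Real.log (k₂ / m) - Real.log (Real.Gamma k₂))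
      - (k₁ * Real.log (k₁ / m) - Real.log (Real.Gamma k₁))) / (k₂ - k₁) with hc
  set φ : ℝ → ℝ := fun x => Real.log x - x / m + c with hφ
  -- the key equivalence
  have key : ∀ x : ℝ, 0 < x →
      (Real.log (gammaPdf k₂ (k₂ / m) x) - Real.log (gammaPdf k₁ (k₁ / m) x)
        = (k₂ - k₁) * φ x) := by
    intro x hx
    rw [log_gammaPdf hk₂ (by positivity) hx, log_gammaPdf hk₁ (by positivity) hx, hφ]
    simp only [hc]
    field_simp
    ring
  have equiv₁ : ∀ x : ℝ, 0 < x → (φ x < 0 ↔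
      gammaPdf k₂ (k₂ / m) x < gammaPdf k₁ (k₁ / m) x) := by
    intro x hx
    have h1 := gammaPdf_pos hk₁ (show (0:ℝ) < k₁/m by positivity) hx
    have h2 := gammaPdf_pos hk₂ (show (0:ℝ) < k₂/m by positivity) hx
    have hkey := key x hx
    rw [← log_lt_log_iff h2 h1, ← sub_neg (b := Real.log (gammaPdf k₁ (k₁ / m) x)), hkey]
    exact ⟨fun h => mul_neg_of_pos_of_neg hD h, fun h => by
      by_contra hge
      push_neg at hge
      exact absurd h (not_lt.mpr (mul_nonneg hD.le hge))⟩
  have equiv₂ : ∀ x : ℝ, 0 < x → (0 < φ x ↔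
      gammaPdf k₁ (k₁ / m) x < gammaPdf k₂ (k₂ / m) x) := by
    intro x hx
    have h1 := gammaPdf_pos hk₁ (show (0:ℝ) < k₁/m by positivity) hx
    have h2 := gammaPdf_pos hk₂ (show (0:ℝ) < k₂/m by positivity) hx
    have hkey := key x hx
    rw [← log_lt_log_iff h1 h2, ← sub_pos (a := Real.log (gammaPdf k₂ (k₂ / m) x)), hkey]
    exact ⟨fun h => mul_pos hD h, fun h => by
      by_contra hge
      push_neg at hge
      exact absurd h (not_lt.mpr (mul_nonpos_iff.mpr (Or.inl ⟨hD.le, hge⟩)))⟩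
  -- φ m > 0
  have hφm : 0 < φ m := by
    have hF := Fgam_strictMono hk₁ hk
    unfold Fgam at hF
    have hlog₂ : Real.log (k₂ / m) = Real.log k₂ - Real.log m :=
      log_div (ne_of_gt hk₂) (ne_of_gt hm)
    have hlog₁ : Real.log (k₁ / m) = Real.log k₁ - Real.log m :=
      log_div (ne_of_gt hk₁) (ne_of_gt hm)
    have hcval : c * (k₂ - k₁)
        = (k₂ * Real.log (k₂ / m) - Real.log (Real.Gamma k₂))
          - (k₁ * Real.log (k₁ / m) - Real.log (Real.Gamma k₁)) := by
      rw [hc]; field_simp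
    rw [hlog₁, hlog₂] at hcval
    have : φ m = Real.log m - 1 + c := by
      simp only [hφ]
      rw [div_self (ne_of_gt hm)]
    rw [this]
    nlinarith [hcval, hF]
  -- continuity of φ at positive points
  have hcont : ∀ x : ℝ, 0 < x → ContinuousAt φ x := by
    intro x hx
    exact ((Real.continuousAt_log (ne_of_gt hx)).sub
      (continuousAt_id.div_const m)).add continuousAt_const
  -- derivative of φ
  have hderiv : ∀ x : ℝ, 0 < x → HasDerivAt φ (x⁻¹ - 1 / m) x := by
    intro x hx
    have h1 : HasDerivAt (fun y : ℝ => y / m) (1 / m) x := by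
      simpa using (hasDerivAt_id x).div_const m
    simpa [hφ] using ((Real.hasDerivAt_log (ne_of_gt hx)).sub h1).add_const c
  -- strict mono on Ioc 0 m
  have hmono : StrictMonoOn φ (Ioc 0 m) := by
    apply strictMonoOn_of_deriv_pos (convex_Ioc 0 m)
    · exact fun x hx => (hcont x hx.1).continuousWithinAt
    · intro x hx
      rw [interior_Ioc] at hx
      rw [(hderiv x hx.1).deriv]
      have : (1:ℝ)/m < 1/x := by
        apply one_div_lt_one_div_of_lt hx.1 hx.2
      rw [sub_pos]
      simpa [one_div] using this
  -- strict anti on Ici m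
  have hanti : StrictAntiOn φ (Ici m) := by
    apply strictAntiOn_of_deriv_neg (convex_Ici m)
    · exact fun x hx => (hcont x (lt_of_lt_of_le hm hx)).continuousWithinAt
    · intro x hx
      rw [interior_Ici] at hx
      rw [(hderiv x (hm.trans hx)).deriv]
      have : (1:ℝ)/x < 1/m := by
        apply one_div_lt_one_div_of_lt hm hx
      rw [sub_neg]
      simpa [one_div] using this
  -- a point x₀ ∈ (0, m) with φ x₀ < 0
  set x₀ : ℝ := min (m / 2) (Real.exp (-c - 1)) with hx₀def
  have hx₀pos : 0 < x₀ := lt_min (by linarith) (exp_pos _)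
  have hx₀m : x₀ < m := lt_of_le_of_lt (min_le_left _ _) (by linarith)
  have hφx₀ : φ x₀ < 0 := by
    have h1 : Real.log x₀ ≤ -c - 1 := by
      calc Real.log x₀ ≤ Real.log (Real.exp (-c - 1)) :=
            Real.log_le_log hx₀pos (min_le_right _ _)
        _ = -c - 1 := log_exp _
    have h2 : 0 < x₀ / m := by positivity
    simp only [hφ]; linarith
  -- a point x₁ > m with φ x₁ < 0
  set x₁ : ℝ := max (m + 1) (2 * m * (Real.log (2 * m) + c)) with hx₁def
  have hx₁m : m < x₁ := lt_of_lt_of_le (by linarith) (le_max_left _ _)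
  have hx₁pos : 0 < x₁ := hm.trans hx₁m
  have hφx₁ : φ x₁ < 0 := by
    have hlb : Real.log (2 * m) + c ≤ x₁ / (2 * m) := by
      rw [le_div_iff₀ (by positivity)]
      calc (Real.log (2 * m) + c) * (2 * m) = 2 * m * (Real.log (2 * m) + c) := by ring
        _ ≤ x₁ := le_max_right _ _
    have hle : Real.log x₁ ≤ x₁ / (2 * m) - 1 + Real.log (2 * m) := by
      have h1 : Real.log (x₁ / (2 * m)) ≤ x₁ / (2 * m) - 1 :=
        Real.log_le_sub_one_of_pos (by positivity)
      have h2 : Real.log (x₁ / (2 * m)) = Real.log x₁ - Real.log (2 * m) :=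
        log_div (ne_of_gt hx₁pos) (by positivity)
      linarith [h2 ▸ h1]
    have hhalf : x₁ / (2 * m) - x₁ / m = -(x₁ / (2 * m)) := by field_simp; ring
    simp only [hφ]
    have : Real.log x₁ - x₁ / m + c ≤ -(x₁ / (2 * m)) - 1 + Real.log (2 * m) + c := by
      linarith [hle, hhalf]
    linarith [hlb, this]
  -- obtain a via IVT on [x₀, m]
  obtain ⟨a, haIcc, haeq⟩ : ∃ a ∈ Icc x₀ m, φ a = 0 := by
    have hIVT := intermediate_value_Icc (le_of_lt hx₀m)
      (fun x hx => (hcont x (lt_of_lt_of_le hx₀pos hx.1)).continuousWithinAt)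
    have h0 : (0:ℝ) ∈ Icc (φ x₀) (φ m) := ⟨le_of_lt hφx₀, le_of_lt hφm⟩
    obtain ⟨a, ha1, ha2⟩ := hIVT h0
    exact ⟨a, ha1, ha2⟩
  have hapos : 0 < a := lt_of_lt_of_le hx₀pos haIcc.1
  have haltm : a < m := lt_of_le_of_ne haIcc.2 (by rintro rfl; linarith [haeq, hφm])
  -- obtain b via IVT on [m, x₁]
  obtain ⟨b, hbIcc, hbeq⟩ : ∃ b ∈ Icc m x₁, φ b = 0 := by
    have hIVT := intermediate_value_Icc' (le_of_lt hx₁m)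
      (fun x hx => (hcont x (lt_of_lt_of_le hm hx.1)).continuousWithinAt)
    have h0 : (0:ℝ) ∈ Icc (φ x₁) (φ m) := ⟨le_of_lt hφx₁, le_of_lt hφm⟩
    obtain ⟨b, hb1, hb2⟩ := hIVT h0
    exact ⟨b, hb1, hb2⟩
  have hmltb : m < b := lt_of_le_of_ne hbIcc.1 (by rintro rfl; linarith [hbeq, hφm])
  refine ⟨a, b, hapos, haltm.trans hmltb, ?_, ?_, ?_⟩
  · intro x hx
    rw [← equiv₁ x hx.1]
    have : φ x < φ a :=
      hmono ⟨hx.1, le_of_lt (hx.2.trans haltm)⟩ ⟨hapos, le_of_lt haltm⟩ hx.2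
    linarith [haeq ▸ this]
  · intro x hx
    have hxpos : 0 < x := hapos.trans hx.1
    rw [← equiv₂ x hxpos]
    rcases le_or_gt x m with hxm | hxm
    · have : φ a < φ x := hmono ⟨hapos, le_of_lt haltm⟩ ⟨hxpos, hxm⟩ hx.1
      linarith [haeq ▸ this]
    · have : φ b < φ x := hanti (le_of_lt hxm) hbIcc.1 hx.2
      linarith [hbeq ▸ this]
  · intro x hx
    have hxm : m < b := hmltb
    have : φ x < φ b := hanti hbIcc.1 (le_of_lt (hmltb.trans hx)) hx
    rw [← equiv₁ x (hm.trans (hmltb.trans hx))]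
    linarith [hbeq ▸ this]
end

section
/- Closed-form expression for the Hoover index of the negative binomial distribution: let k > 0 and m > 0. Then (1/(2m)) · ∑_{x∈ℕ} |x − m| · f(x;k,m) = F(⌊m⌋; k, m) − F(⌊m⌋ − 1; k+1, m + m/k), where F(x;k,m) = ∑_{y∈ℕ, y≤x} f(y;k,m) is the cumulative distribution function of NB(k,m) (with F(t;k,m) = 0 for t < 0) and ⌊m⌋ is the floor of m. -/
open MeasureTheory Real Set

lemma nbPmf_nonneg {k m : ℝ} (hk : 0 < k) (hm : 0 < m) (x : ℕ) : 0 ≤ nbPmf k m x := by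
  have h1 : 0 < Real.Gamma (k + x) := Real.Gamma_pos_of_pos (by positivity)
  have h2 : 0 < Real.Gamma k := Real.Gamma_pos_of_pos hk
  unfold nbPmf
  positivity

lemma nbPmf_succ_mul {k m : ℝ} (hk : 0 < k) (hm : 0 < m) (y : ℕ) :
    ((y:ℝ) + 1) * nbPmf k m (y+1) = m * nbPmf (k+1) (m + m/k) y := by
  have hkm : k + m ≠ 0 := by positivity
  have hΓ : Real.Gamma (k+1) = k * Real.Gamma k := Real.Gamma_add_one hk.ne'
  have hbase : (k+1) / ((k+1) + (m + m/k)) = k / (k+m) := by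
    rw [div_eq_div_iff (by positivity) (by positivity)]
    field_simp
  have hbase2 : (m + m/k) / ((k+1) + (m + m/k)) = m / (k+m) := by
    rw [div_eq_div_iff (by positivity) (by positivity)]
    field_simp
  have harg : k + ((y:ℕ)+1 : ℕ) = (k+1) + (y:ℝ) := by push_cast; ring
  have hexp : (k / (k+m)) ^ ((k+1) : ℝ) = (k / (k+m)) ^ (k:ℝ) * (k/(k+m)) := by
    rw [Real.rpow_add (by positivity) k 1, Real.rpow_one]
  unfold nbPmf
  rw [hbase, hbase2, hΓ, hexp, harg, Nat.factorial_succ, pow_succ]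
  have hΓk : Real.Gamma k ≠ 0 := (Real.Gamma_pos_of_pos hk).ne'
  have hfac : ((y.factorial : ℝ)) ≠ 0 := Nat.cast_ne_zero.mpr y.factorial_ne_zero
  have hy1 : ((y:ℝ) + 1) ≠ 0 := by positivity
  push_cast
  field_simp

lemma gamma_lintegral {a c : ℝ} (ha : 0 < a) (hc : 0 < c) :
    ∫⁻ t in Ioi (0:ℝ), ENNReal.ofReal (t ^ (a-1) * Real.exp (-(c*t)))
      = ENNReal.ofReal ((1/c) ^ a * Real.Gamma a) := by
  have hmeas : Measurable fun t : ℝ => t ^ (a-1) * Real.exp (-(c*t)) := by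
    fun_prop
  have hnn : 0 ≤ᵐ[volume.restrict (Ioi (0:ℝ))]
      fun t : ℝ => t ^ (a-1) * Real.exp (-(c*t)) := by
    rw [Filter.EventuallyLE, ae_restrict_iff' measurableSet_Ioi]
    exact ae_of_all _ fun t (ht : 0 < t) => by positivity
  have heq := integral_eq_lintegral_of_nonneg_ae hnn hmeas.aestronglyMeasurable.restrict
  rw [Real.integral_rpow_mul_exp_neg_mul_Ioi ha hc] at heq
  have hpos : 0 < (1/c) ^ a * Real.Gamma a := by
    have := Real.Gamma_pos_of_pos ha
    positivity
  have hne : (∫⁻ t in Ioi (0:ℝ), ENNReal.ofReal (t ^ (a-1) * Real.exp (-(c*t)))) ≠ ⊤ := by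
    intro h
    rw [h] at heq
    rw [ENNReal.toReal_top] at heq
    linarith
  rw [heq, ENNReal.ofReal_toReal hne]

lemma nbPmf_tsum_ofReal {k m : ℝ} (hk : 0 < k) (hm : 0 < m) :
    ∑' x : ℕ, ENNReal.ofReal (nbPmf k m x) = 1 := by
  set r : ℝ := k / m with hr
  have hrpos : 0 < r := by positivity
  set c : ℝ := 1 + r with hc
  have hcpos : 0 < c := by positivity
  have hΓk : 0 < Real.Gamma k := Real.Gamma_pos_of_pos hk
  set F : ℕ → ℝ → ℝ := fun x t =>
    t ^ x * Real.exp (-t) / (x.factorial : ℝ)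
      * (r ^ (k:ℝ) / Real.Gamma k * (t ^ (k-1) * Real.exp (-(r*t)))) with hF
  set B : ℕ → ℝ := fun x => r ^ (k:ℝ) / (Real.Gamma k * (x.factorial : ℝ)) with hB
  have hBpos : ∀ x, 0 < B x := fun x => by
    have : (0:ℝ) < (x.factorial : ℝ) := by exact_mod_cast x.factorial_pos
    rw [hB]
    positivity
  have key : ∀ (x : ℕ), ∀ t ∈ Ioi (0:ℝ),
      F x t = B x * (t ^ (k + (x:ℝ) - 1) * Real.exp (-(c*t))) := by
    intro x t ht
    have ht0 : (0:ℝ) < t := ht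
    have h1 : (t:ℝ) ^ (x:ℕ) = t ^ (x:ℝ) := (Real.rpow_natCast t x).symm
    have h2 : t ^ (k + (x:ℝ) - 1) = t ^ (k - 1) * t ^ (x:ℝ) := by
      rw [← Real.rpow_add ht0]
      ring_nf
    have h3 : Real.exp (-(c*t)) = Real.exp (-t) * Real.exp (-(r*t)) := by
      rw [← Real.exp_add]
      congr 1
      rw [hc]
      ring
    rw [hF, hB]
    simp only
    rw [h1, h2, h3]
    ring
  have claimA : ∀ x : ℕ,
      (∫⁻ t in Ioi (0:ℝ), ENNReal.ofReal (F x t)) = ENNReal.ofReal (nbPmf k m x) := by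
    intro x
    have hax : 0 < k + (x:ℝ) := by positivity
    calc ∫⁻ t in Ioi (0:ℝ), ENNReal.ofReal (F x t)
        = ∫⁻ t in Ioi (0:ℝ), ENNReal.ofReal (B x)
            * ENNReal.ofReal (t ^ (k + (x:ℝ) - 1) * Real.exp (-(c*t))) := by
          refine setLIntegral_congr_fun measurableSet_Ioi (fun t ht => ?_)
          rw [key x t ht, ENNReal.ofReal_mul (hBpos x).le]
      _ = ENNReal.ofReal (B x)
            * ∫⁻ t in Ioi (0:ℝ), ENNReal.ofReal (t ^ (k + (x:ℝ) - 1) * Real.exp (-(c*t))) :=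
          lintegral_const_mul' _ _ ENNReal.ofReal_ne_top
      _ = ENNReal.ofReal (B x) * ENNReal.ofReal ((1/c) ^ (k + (x:ℝ)) * Real.Gamma (k + (x:ℝ))) := by
          rw [gamma_lintegral hax hcpos]
      _ = ENNReal.ofReal (nbPmf k m x) := by
          rw [← ENNReal.ofReal_mul (hBpos x).le]
          congr 1
          have h1c : 1/c = m / (k+m) := by
            rw [hc, hr]
            rw [div_eq_div_iff (by positivity) (by positivity)]
            field_simp
            ring
          have hsplit : (1/c) ^ (k + (x:ℝ)) = (1/c) ^ (k:ℝ) * (1/c) ^ (x:ℕ) := by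
            rw [Real.rpow_add (by positivity), Real.rpow_natCast]
          have hmul : r ^ (k:ℝ) * (m/(k+m)) ^ (k:ℝ) = (k/(k+m)) ^ (k:ℝ) := by
            rw [← Real.mul_rpow hrpos.le (by positivity)]
            congr 1
            rw [hr]
            field_simp
          rw [hB, hsplit, h1c]
          simp only
          rw [show B x * ((m / (k + m)) ^ (k:ℝ) * (m / (k + m)) ^ x * Real.Gamma (k + (x:ℝ)))
            = (r ^ (k:ℝ) * (m/(k+m)) ^ (k:ℝ)) * ((m / (k + m)) ^ x * Real.Gamma (k + (x:ℝ)))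
              / (Real.Gamma k * (x.factorial : ℝ)) from by rw [hB]; ring, hmul]
          unfold nbPmf
          ring
  have hmeasF : ∀ x : ℕ, Measurable fun t : ℝ => ENNReal.ofReal (F x t) := by
    intro x
    rw [hF]
    fun_prop
  have inner : ∀ t ∈ Ioi (0:ℝ), (∑' x : ℕ, ENNReal.ofReal (F x t))
      = ENNReal.ofReal (r ^ (k:ℝ) / Real.Gamma k * (t ^ (k-1) * Real.exp (-(r*t)))) := by
    intro t ht
    have ht0 : (0:ℝ) < t := ht
    have hexp := NormedSpace.expSeries_div_hasSum_exp t
    rw [← Real.exp_eq_exp_ℝ] at hexp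
    have hsum : HasSum (fun x : ℕ => F x t)
        (Real.exp t * (Real.exp (-t) * (r ^ (k:ℝ) / Real.Gamma k * (t ^ (k-1) * Real.exp (-(r*t)))))) := by
      have h2 := hexp.mul_right (Real.exp (-t) * (r ^ (k:ℝ) / Real.Gamma k * (t ^ (k-1) * Real.exp (-(r*t)))))
      refine h2.congr_fun fun x => ?_
      rw [hF]
      simp only
      ring
    have hpt : Real.exp t * (Real.exp (-t) * (r ^ (k:ℝ) / Real.Gamma k * (t ^ (k-1) * Real.exp (-(r*t)))))
        = r ^ (k:ℝ) / Real.Gamma k * (t ^ (k-1) * Real.exp (-(r*t))) := by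
      rw [← mul_assoc, ← Real.exp_add]
      simp
    have hFnn : ∀ x : ℕ, 0 ≤ F x t := by
      intro x
      rw [hF]
      simp only
      have h1 : (0:ℝ) ≤ t ^ (k-1) := Real.rpow_nonneg ht0.le _
      have h2 : (0:ℝ) ≤ r ^ (k:ℝ) := Real.rpow_nonneg hrpos.le _
      positivity
    rw [← ENNReal.ofReal_tsum_of_nonneg hFnn hsum.summable, hsum.tsum_eq, hpt]
  calc ∑' x : ℕ, ENNReal.ofReal (nbPmf k m x)
      = ∑' x : ℕ, ∫⁻ t in Ioi (0:ℝ), ENNReal.ofReal (F x t) := by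
        exact tsum_congr fun x => (claimA x).symm
    _ = ∫⁻ t in Ioi (0:ℝ), ∑' x : ℕ, ENNReal.ofReal (F x t) :=
        (lintegral_tsum fun x => (hmeasF x).aemeasurable).symm
    _ = ∫⁻ t in Ioi (0:ℝ),
          ENNReal.ofReal (r ^ (k:ℝ) / Real.Gamma k)
            * ENNReal.ofReal (t ^ (k-1) * Real.exp (-(r*t))) := by
        refine setLIntegral_congr_fun measurableSet_Ioi (fun t ht => ?_)
        rw [inner t ht, ENNReal.ofReal_mul (by positivity)]
    _ = ENNReal.ofReal (r ^ (k:ℝ) / Real.Gamma k)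
          * ∫⁻ t in Ioi (0:ℝ), ENNReal.ofReal (t ^ (k-1) * Real.exp (-(r*t))) :=
        lintegral_const_mul' _ _ ENNReal.ofReal_ne_top
    _ = ENNReal.ofReal (r ^ (k:ℝ) / Real.Gamma k) * ENNReal.ofReal ((1/r) ^ (k:ℝ) * Real.Gamma k) := by
        rw [gamma_lintegral hk hrpos]
    _ = 1 := by
        rw [← ENNReal.ofReal_mul (by positivity)]
        rw [show r ^ (k:ℝ) / Real.Gamma k * ((1/r) ^ (k:ℝ) * Real.Gamma k)
          = r ^ (k:ℝ) * (1/r) ^ (k:ℝ) * (Real.Gamma k / Real.Gamma k) from by ring]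
        rw [div_self hΓk.ne', ← Real.mul_rpow hrpos.le (by positivity), mul_one_div_cancel hrpos.ne',
          Real.one_rpow, mul_one, ENNReal.ofReal_one]

lemma nbPmf_hasSum {k m : ℝ} (hk : 0 < k) (hm : 0 < m) : HasSum (nbPmf k m) 1 := by
  have h := nbPmf_tsum_ofReal hk hm
  have hnn := nbPmf_nonneg hk hm
  have hsummable : Summable (nbPmf k m) := by
    have h2 := ENNReal.summable_toReal (by rw [h]; exact ENNReal.one_ne_top)
    refine h2.congr fun x => ?_
    rw [ENNReal.toReal_ofReal (hnn x)]
  refine hsummable.hasSum_iff.mpr ?_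
  have h3 : ENNReal.ofReal (∑' x, nbPmf k m x) = 1 := by
    rw [ENNReal.ofReal_tsum_of_nonneg hnn hsummable, h]
  have h4 := congrArg ENNReal.toReal h3
  rwa [ENNReal.toReal_ofReal (tsum_nonneg hnn), ENNReal.toReal_one] at h4

lemma nbPmf_mean {k m : ℝ} (hk : 0 < k) (hm : 0 < m) :
    HasSum (fun x : ℕ => (x:ℝ) * nbPmf k m x) m := by
  have hg : HasSum (nbPmf (k+1) (m + m/k)) 1 := nbPmf_hasSum (by linarith) (by positivity)
  have hg' := hg.mul_left m
  rw [mul_one] at hg'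
  have h2 : HasSum (fun y : ℕ => ((y + 1 : ℕ):ℝ) * nbPmf k m (y+1)) m := by
    refine hg'.congr_fun fun y => ?_
    push_cast
    rw [nbPmf_succ_mul hk hm y]
  have h3 := (hasSum_nat_add_iff (f := fun n : ℕ => (n:ℝ) * nbPmf k m n) 1).mp h2
  simpa using h3


/-- Closed-form expression for the Hoover index of the negative binomial
distribution: `(1/(2m))·E|X - m| = F(⌊m⌋;k,m) - F(⌊m⌋-1; k+1, m + m/k)`,
where `F(x;k,m) = ∑_{y≤x} f(y;k,m)` (and `F(t) = 0` for `t < 0`). -/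
theorem nb_hoover_closed_form (k m : ℝ) (hk : 0 < k) (hm : 0 < m) :
    (1 / (2 * m)) * ∑' x : ℕ, |(x : ℝ) - m| * nbPmf k m x =
      (∑ y ∈ Finset.range (⌊m⌋₊ + 1), nbPmf k m y) -
        ∑ y ∈ Finset.range ⌊m⌋₊, nbPmf (k + 1) (m + m / k) y := by
  set n := ⌊m⌋₊ with hn
  have hf : HasSum (nbPmf k m) 1 := nbPmf_hasSum hk hm
  have hmean : HasSum (fun x : ℕ => (x:ℝ) * nbPmf k m x) m := nbPmf_mean hk hm
  have hfn : ∀ x, 0 ≤ nbPmf k m x := nbPmf_nonneg hk hm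
  have habs : Summable (fun x : ℕ => |(x:ℝ) - m| * nbPmf k m x) := by
    refine Summable.of_nonneg_of_le (fun x => mul_nonneg (abs_nonneg _) (hfn x)) (fun x => ?_)
      (hmean.summable.add (hf.summable.mul_left m))
    have htri : |(x:ℝ) - m| ≤ (x:ℝ) + m := by
      rw [abs_le]
      constructor <;> [linarith [Nat.cast_nonneg (α := ℝ) x]; linarith [Nat.cast_nonneg (α := ℝ) x]]
    calc |(x:ℝ)-m| * nbPmf k m x ≤ ((x:ℝ)+m) * nbPmf k m x :=
          mul_le_mul_of_nonneg_right htri (hfn x)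
      _ = (x:ℝ) * nbPmf k m x + m * nbPmf k m x := by ring
  have hsub : Summable (fun x : ℕ => ((x:ℝ) - m) * nbPmf k m x) := by
    have heq : (fun x : ℕ => ((x:ℝ) - m) * nbPmf k m x)
        = fun x : ℕ => (x:ℝ) * nbPmf k m x - m * nbPmf k m x := funext fun x => by ring
    rw [heq]
    exact hmean.summable.sub (hf.summable.mul_left m)
  have hsigned : (∑' x : ℕ, ((x:ℝ) - m) * nbPmf k m x) = 0 := by
    have heq : (fun x : ℕ => ((x:ℝ) - m) * nbPmf k m x)
        = fun x : ℕ => (x:ℝ) * nbPmf k m x - m * nbPmf k m x := funext fun x => by ring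
    rw [heq, Summable.tsum_sub hmean.summable (hf.summable.mul_left m), hmean.tsum_eq,
      (hf.mul_left m).tsum_eq, mul_one, sub_self]
  set d : ℕ → ℝ := fun x => |(x:ℝ) - m| * nbPmf k m x - ((x:ℝ) - m) * nbPmf k m x with hd
  have hdsummable : Summable d := habs.sub hsub
  have hd0 : ∀ x ∉ Finset.range (n+1), d x = 0 := by
    intro x hx
    have hx' : n + 1 ≤ x := by simpa using hx
    have h1 : m < (n:ℝ) + 1 := Nat.lt_floor_add_one m
    have h2 : ((n:ℝ)+1) ≤ (x:ℝ) := by exact_mod_cast hx'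
    rw [hd]
    simp only
    rw [abs_of_nonneg (by linarith : (0:ℝ) ≤ (x:ℝ) - m)]
    ring
  have hdsum : ∑' x, d x = ∑ x ∈ Finset.range (n+1), d x := tsum_eq_sum hd0
  have split : (∑' x : ℕ, |(x:ℝ) - m| * nbPmf k m x)
      = (∑' x : ℕ, ((x:ℝ)-m) * nbPmf k m x) + ∑' x, d x := by
    rw [← Summable.tsum_add hsub hdsummable]
    exact tsum_congr fun x => by rw [hd]; ring
  rw [split, hsigned, zero_add, hdsum]
  have hdval : ∀ x ∈ Finset.range (n+1), d x = 2*m * nbPmf k m x - 2 * ((x:ℝ) * nbPmf k m x) := by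
    intro x hx
    have hx' : x ≤ n := Nat.lt_succ_iff.mp (Finset.mem_range.mp hx)
    have hfl : ((n:ℝ)) ≤ m := Nat.floor_le hm.le
    have hxn : (x:ℝ) ≤ (n:ℝ) := by exact_mod_cast hx'
    rw [hd]
    simp only
    rw [abs_of_nonpos (by linarith : (x:ℝ) - m ≤ 0)]
    ring
  rw [Finset.sum_congr rfl hdval, Finset.sum_sub_distrib, ← Finset.mul_sum, ← Finset.mul_sum]
  have key : ∑ x ∈ Finset.range (n+1), (x:ℝ) * nbPmf k m x
      = m * ∑ y ∈ Finset.range n, nbPmf (k+1) (m+m/k) y := by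
    rw [Finset.sum_range_succ']
    simp only [Nat.cast_zero, zero_mul, add_zero, Nat.cast_add, Nat.cast_one]
    rw [Finset.mul_sum]
    exact Finset.sum_congr rfl fun y _ => nbPmf_succ_mul hk hm y
  rw [key]
  field_simp
end

section
/- When the mean is at most one, the Hoover index of the negative binomial distribution equals one minus prevalence: let k > 0 and 0 < m ≤ 1. Then (1/(2m)) · ∑_{x∈ℕ} |x − m| · f(x;k,m) = (k/(k+m))^k, i.e., the Hoover index of NB(k,m) equals f(0;k,m) = 1 − prevalence, where prevalence = 1 − (k/(k+m))^k. -/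
open Real Filter Topology

noncomputable def nbCoef (k : ℝ) (x : ℕ) : ℝ :=
  Real.Gamma (k + x) / (Real.Gamma k * (Nat.factorial x : ℝ))

lemma nbCoef_zero (k : ℝ) : nbCoef k 0 = Real.Gamma k / Real.Gamma k := by
  simp [nbCoef]

lemma nbCoef_zero' {k : ℝ} (hk : 0 < k) : nbCoef k 0 = 1 := by
  rw [nbCoef_zero, div_self (Real.Gamma_pos_of_pos hk).ne']

lemma nbCoef_pos {k : ℝ} (hk : 0 < k) (x : ℕ) : 0 < nbCoef k x := by
  apply div_pos (Real.Gamma_pos_of_pos (by positivity))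
  positivity

lemma nbCoef_succ {k : ℝ} (hk : 0 < k) (x : ℕ) :
    nbCoef k (x + 1) = nbCoef k x * (k + x) / (x + 1) := by
  have h1 : Real.Gamma (k + (x + 1 : ℕ)) = (k + x) * Real.Gamma (k + x) := by
    push_cast
    rw [show k + ((x : ℝ) + 1) = (k + x) + 1 by ring, Real.Gamma_add_one (by positivity)]
  have h2 : ((Nat.factorial (x + 1) : ℝ)) = (x + 1) * Nat.factorial x := by
    push_cast [Nat.factorial_succ]; ring
  rw [nbCoef, nbCoef, h1, h2]
  have hG : Real.Gamma k ≠ 0 := (Real.Gamma_pos_of_pos hk).ne'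
  have hf : (Nat.factorial x : ℝ) ≠ 0 := by positivity
  field_simp

lemma summable_nbCoef_succ_mul {k : ℝ} (hk : 0 < k) {r : ℝ} (hr0 : 0 < r) (hr1 : r < 1) :
    Summable (fun x : ℕ => nbCoef k x * (x + 1) * r ^ x) := by
  set v : ℕ → ℝ := fun x => nbCoef k x * (x + 1) * r ^ x with hv
  have hvpos : ∀ x, 0 < v x := fun x => by
    have := nbCoef_pos hk x; positivity
  apply summable_of_ratio_test_tendsto_lt_one hr1
    (Filter.Eventually.of_forall fun n => (hvpos n).ne')
  have hratio : ∀ n : ℕ, ‖v (n + 1)‖ / ‖v n‖ =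
      (1 + (k - 1) / (n + 1)) * (1 + 1 / (n + 1)) * r := by
    intro n
    rw [Real.norm_eq_abs, Real.norm_eq_abs, abs_of_pos (hvpos _), abs_of_pos (hvpos _)]
    have hc := nbCoef_succ hk n
    have hcp := (nbCoef_pos hk n).ne'
    have hn1 : ((n : ℝ) + 1) ≠ 0 := by positivity
    have hrp : r ^ n ≠ 0 := by positivity
    simp only [hv]
    rw [hc]
    push_cast
    rw [pow_succ]
    field_simp
    ring
  simp only [hratio]
  have h1 : Tendsto (fun n : ℕ => (k - 1) / ((n : ℝ) + 1)) atTop (𝓝 0) := by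
    apply Tendsto.div_atTop tendsto_const_nhds
    exact tendsto_atTop_add_const_right _ _ tendsto_natCast_atTop_atTop
  have h2 : Tendsto (fun n : ℕ => (1 : ℝ) / ((n : ℝ) + 1)) atTop (𝓝 0) := by
    apply Tendsto.div_atTop tendsto_const_nhds
    exact tendsto_atTop_add_const_right _ _ tendsto_natCast_atTop_atTop
  have := (((tendsto_const_nhds (x := (1:ℝ))).add h1).mul
    ((tendsto_const_nhds (x := (1:ℝ))).add h2)).mul (tendsto_const_nhds (x := r))
  simpa using this

lemma summable_nbCoef_A {k : ℝ} (hk : 0 < k) {y r : ℝ} (hy : |y| ≤ r) (hr0 : 0 < r)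
    (hr1 : r < 1) : Summable (fun x : ℕ => nbCoef k x * y ^ x) := by
  apply Summable.of_norm_bounded (summable_nbCoef_succ_mul hk hr0 hr1)
  intro x
  have hc := nbCoef_pos hk x
  rw [norm_mul, Real.norm_eq_abs, Real.norm_eq_abs, abs_of_pos hc, abs_pow]
  calc nbCoef k x * |y| ^ x ≤ nbCoef k x * r ^ x := by
        exact mul_le_mul_of_nonneg_left (pow_le_pow_left₀ (abs_nonneg y) hy x) hc.le
    _ ≤ nbCoef k x * (x + 1) * r ^ x := by
        have h1 : (1 : ℝ) ≤ (x : ℝ) + 1 := le_add_of_nonneg_left (x.cast_nonneg)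
        have h2 : nbCoef k x * r ^ x * 1 ≤ nbCoef k x * r ^ x * ((x:ℝ)+1) :=
          mul_le_mul_of_nonneg_left h1 (by positivity)
        nlinarith [h2]

lemma summable_nbCoef_B {k : ℝ} (hk : 0 < k) {y r : ℝ} (hy : |y| ≤ r) (hr0 : 0 < r)
    (hr1 : r < 1) : Summable (fun x : ℕ => nbCoef k x * x * y ^ x) := by
  apply Summable.of_norm_bounded (summable_nbCoef_succ_mul hk hr0 hr1)
  intro x
  have hc := nbCoef_pos hk x
  rw [norm_mul, norm_mul, Real.norm_eq_abs, Real.norm_eq_abs, Real.norm_eq_abs,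
    abs_of_pos hc, abs_pow, Nat.abs_cast]
  calc nbCoef k x * x * |y| ^ x ≤ nbCoef k x * x * r ^ x := by
        apply mul_le_mul_of_nonneg_left (pow_le_pow_left₀ (abs_nonneg y) hy x) (by positivity)
    _ ≤ nbCoef k x * (x + 1) * r ^ x := by
        have h1 : (x : ℝ) ≤ (x : ℝ) + 1 := by linarith
        have h2 : nbCoef k x * r ^ x * (x:ℝ) ≤ nbCoef k x * r ^ x * ((x:ℝ)+1) :=
          mul_le_mul_of_nonneg_left h1 (by positivity)
        nlinarith [h2]

lemma tsum_nbCoef {k : ℝ} (hk : 0 < k) {t : ℝ} (ht0 : 0 ≤ t) (ht1 : t < 1) :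
    ∑' x : ℕ, nbCoef k x * t ^ x = (1 - t) ^ (-k : ℝ) := by
  set r : ℝ := (1 + t) / 2 with hrdef
  have hr0 : 0 < r := by simp [hrdef]; linarith
  have hr1 : r < 1 := by simp [hrdef]; linarith
  have htr : t < r := by simp [hrdef]; linarith
  set S : Set ℝ := Set.Ioo (-r) r with hSdef
  set u : ℕ → ℝ := fun x => r⁻¹ * (nbCoef k x * (x + 1) * r ^ x) with hudef
  have husum : Summable u := (summable_nbCoef_succ_mul hk hr0 hr1).mul_left _
  set A : ℝ → ℝ := fun s => ∑' x : ℕ, nbCoef k x * s ^ x with hAdef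
  set D : ℝ → ℝ := fun s => ∑' x : ℕ, nbCoef k x * ((x : ℝ) * s ^ (x - 1)) with hDdef
  have hderiv : ∀ (x : ℕ) (y : ℝ), y ∈ S →
      HasDerivAt (fun s => nbCoef k x * s ^ x) (nbCoef k x * ((x : ℝ) * y ^ (x - 1))) y :=
    fun x y _ => (hasDerivAt_pow x y).const_mul _
  have hbound : ∀ (x : ℕ) (y : ℝ), y ∈ S → ‖nbCoef k x * ((x : ℝ) * y ^ (x - 1))‖ ≤ u x := by
    intro x y hy
    have hyr : |y| ≤ r := le_of_lt (abs_lt.mpr ⟨hy.1, hy.2⟩)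
    have hc := nbCoef_pos hk x
    cases x with
    | zero => simp [hudef]; positivity
    | succ n =>
      have h1 : ‖nbCoef k (n+1) * (((n+1 : ℕ) : ℝ) * y ^ (n + 1 - 1))‖ =
          nbCoef k (n+1) * ((n:ℝ)+1) * |y| ^ n := by
        rw [norm_mul, norm_mul, Real.norm_eq_abs, Real.norm_eq_abs, Real.norm_eq_abs,
          abs_of_pos hc, abs_pow, Nat.abs_cast]
        push_cast
        ring
      rw [h1]
      have h2 : u (n+1) = nbCoef k (n+1) * ((n:ℝ)+2) * r ^ n := by
        simp only [hudef]
        push_cast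
        rw [pow_succ]
        field_simp
        ring
      rw [h2]
      have h3 : |y| ^ n ≤ r ^ n := pow_le_pow_left₀ (abs_nonneg y) hyr n
      calc nbCoef k (n+1) * ((n:ℝ)+1) * |y| ^ n ≤ nbCoef k (n+1) * ((n:ℝ)+1) * r ^ n :=
            mul_le_mul_of_nonneg_left h3 (by positivity)
        _ ≤ nbCoef k (n+1) * ((n:ℝ)+2) * r ^ n := by
            have h6 : (0:ℝ) ≤ r ^ n := by positivity
            nlinarith [mul_le_mul_of_nonneg_left (show ((n:ℝ)+1) ≤ (n:ℝ)+2 by linarith)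
              (mul_nonneg hc.le h6)]
  have hg0 : Summable fun x : ℕ => nbCoef k x * (0:ℝ) ^ x := by
    apply summable_of_ne_finset_zero (s := {0})
    intro x hx
    simp at hx
    simp [zero_pow hx]
  have h0S : (0:ℝ) ∈ S := by constructor <;> simp [hr0] <;> linarith
  have hA : ∀ y ∈ S, HasDerivAt A (D y) y := fun y hy =>
    hasDerivAt_tsum_of_isPreconnected husum isOpen_Ioo (convex_Ioo _ _).isPreconnected
      hderiv hbound h0S hg0 hy
  -- ODE identity
  have hODE : ∀ y ∈ S, (1 - y) * D y = k * A y := by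
    intro y hy
    have hyr : |y| ≤ r := le_of_lt (abs_lt.mpr ⟨hy.1, hy.2⟩)
    have sumA : Summable (fun x : ℕ => nbCoef k x * y ^ x) :=
      summable_nbCoef_A hk hyr hr0 hr1
    have sumB : Summable (fun x : ℕ => nbCoef k x * x * y ^ x) :=
      summable_nbCoef_B hk hyr hr0 hr1
    have sumD : Summable (fun x : ℕ => nbCoef k x * ((x : ℝ) * y ^ (x - 1))) :=
      Summable.of_norm_bounded husum (fun x => hbound x y hy)
    have key : ∀ x : ℕ, nbCoef k (x+1) * ((((x+1) : ℕ) : ℝ) * y ^ (x + 1 - 1)) =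
        k * (nbCoef k x * y ^ x) + nbCoef k x * x * y ^ x := by
      intro x
      rw [nbCoef_succ hk]
      have hx1 : ((x:ℝ)+1) ≠ 0 := by positivity
      push_cast
      field_simp
    have stepD : D y = k * A y + ∑' x : ℕ, nbCoef k x * x * y ^ x := by
      rw [hDdef]
      simp only
      rw [Summable.tsum_eq_zero_add sumD]
      simp only [Nat.cast_zero, zero_mul, mul_zero, zero_add]
      rw [tsum_congr key, Summable.tsum_add (sumA.mul_left k) sumB, tsum_mul_left]
    have stepB : y * D y = ∑' x : ℕ, nbCoef k x * x * y ^ x := by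
      rw [hDdef]
      simp only
      rw [← tsum_mul_left]
      congr 1
      funext x
      cases x with
      | zero => simp
      | succ n => push_cast; ring
    linear_combination stepD - stepB
  -- the auxiliary function is constant
  set g : ℝ → ℝ := fun s => (1 - s) ^ (k : ℝ) * A s with hgdef
  have hgderiv : ∀ y ∈ S, HasDerivAt g 0 y := by
    intro y hy
    have h1y : 0 < 1 - y := by
      have := hy.2
      simp only [hSdef, Set.mem_Ioo] at hy
      linarith [hy.2]
    have hrpow : HasDerivAt (fun s : ℝ => (1 - s) ^ (k : ℝ))
        (k * (1 - y) ^ (k - 1) * (-1)) y :=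
      HasDerivAt.comp y (Real.hasDerivAt_rpow_const (Or.inl h1y.ne'))
        ((hasDerivAt_id y).const_sub 1)
    have hmul := hrpow.mul (hA y hy)
    have hval : k * (1 - y) ^ (k - 1) * (-1) * A y + (1 - y) ^ (k : ℝ) * D y = 0 := by
      have hk1 : (1 - y) ^ (k : ℝ) = (1 - y) ^ (k - 1) * (1 - y) := by
        rw [← Real.rpow_add_one h1y.ne' (k - 1)]
        norm_num
      rw [hk1]
      linear_combination (1 - y) ^ (k - 1) * hODE y hy
    rw [hval] at hmul
    exact hmul
  have hsub : Set.Icc (0:ℝ) t ⊆ S := by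
    intro y hy
    exact ⟨by linarith [hy.1], by linarith [hy.2]⟩
  have hconst := constant_of_has_deriv_right_zero
    (f := g) (a := 0) (b := t)
    (fun y hy => ((hgderiv y (hsub hy)).continuousAt).continuousWithinAt)
    (fun y hy => (hgderiv y (hsub (Set.mem_Icc_of_Ico hy))).hasDerivWithinAt)
  have hgt := hconst t (Set.right_mem_Icc.mpr ht0)
  have hA0 : A 0 = 1 := by
    rw [hAdef]
    simp only
    rw [tsum_eq_single 0 (fun x hx => by simp [zero_pow hx])]
    simp [nbCoef_zero' hk]
  have hg0v : g 0 = 1 := by simp [hgdef, hA0]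
  rw [hg0v] at hgt
  have h1t : (0:ℝ) < 1 - t := by linarith
  have hpow : (0:ℝ) < (1 - t) ^ (k : ℝ) := Real.rpow_pos_of_pos h1t k
  have hgt' : (1 - t) ^ (k : ℝ) * A t = 1 := hgt
  have : A t = ((1 - t) ^ (k : ℝ))⁻¹ := eq_inv_of_mul_eq_one_left (by linarith [hgt'] : A t * (1 - t) ^ (k : ℝ) = 1) 
  rw [Real.rpow_neg h1t.le]
  exact this

lemma tsum_nbCoef_mul {k : ℝ} (hk : 0 < k) {t : ℝ} (ht0 : 0 ≤ t) (ht1 : t < 1) :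
    (1 - t) * ∑' x : ℕ, nbCoef k x * x * t ^ x =
      k * t * ∑' x : ℕ, nbCoef k x * t ^ x := by
  set r : ℝ := (1 + t) / 2 with hrdef
  have hr0 : 0 < r := by simp [hrdef]; linarith
  have hr1 : r < 1 := by simp [hrdef]; linarith
  have htr : |t| ≤ r := by rw [abs_of_nonneg ht0]; simp [hrdef]; linarith
  have sumA : Summable (fun x : ℕ => nbCoef k x * t ^ x) :=
    summable_nbCoef_A hk htr hr0 hr1
  have sumB : Summable (fun x : ℕ => nbCoef k x * x * t ^ x) :=
    summable_nbCoef_B hk htr hr0 hr1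
  have key : ∀ x : ℕ, nbCoef k (x+1) * (((x+1) : ℕ) : ℝ) * t ^ (x + 1) =
      t * (k * (nbCoef k x * t ^ x) + nbCoef k x * x * t ^ x) := by
    intro x
    rw [nbCoef_succ hk]
    have hx1 : ((x:ℝ)+1) ≠ 0 := by positivity
    push_cast
    rw [pow_succ]
    field_simp
  have hB := Summable.tsum_eq_zero_add sumB
  simp only [Nat.cast_zero, mul_zero, zero_mul, zero_add] at hB
  rw [tsum_congr key, tsum_mul_left, Summable.tsum_add (sumA.mul_left k) sumB, tsum_mul_left] at hB
  linear_combination hB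

/-- When the mean is at most one, the Hoover index of the negative binomial
distribution equals one minus prevalence, i.e. `(k/(k+m))^k`. -/
theorem nb_hoover_eq_one_sub_prevalence (k m : ℝ) (hk : 0 < k) (hm : 0 < m)
    (hm1 : m ≤ 1) :
    (1 / (2 * m)) * ∑' x : ℕ, |(x : ℝ) - m| * nbPmf k m x =
      (k / (k + m)) ^ (k : ℝ) := by
  have hkm : 0 < k + m := by linarith
  set t : ℝ := m / (k + m) with htdef
  have ht0 : 0 < t := by positivity
  have ht1 : t < 1 := by rw [htdef, div_lt_one hkm]; linarith
  have h1t : 1 - t = k / (k + m) := by rw [htdef]; field_simp; ring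
  set c : ℝ := (k / (k + m)) ^ (k : ℝ) with hcdef
  have hc : 0 < c := Real.rpow_pos_of_pos (by positivity) _
  have hpmf : ∀ x : ℕ, nbPmf k m x = c * (nbCoef k x * t ^ x) := by
    intro x
    rw [nbPmf, nbCoef, hcdef, htdef]
    ring
  have hA : (∑' x : ℕ, nbCoef k x * t ^ x) = (1 - t) ^ (-k : ℝ) :=
    tsum_nbCoef hk ht0.le ht1
  have hcA : c * (∑' x : ℕ, nbCoef k x * t ^ x) = 1 := by
    rw [hA, h1t, Real.rpow_neg (by positivity), hcdef]
    exact mul_inv_cancel₀ hc.ne'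
  set r : ℝ := (1 + t) / 2 with hrdef
  have hr0 : 0 < r := by positivity
  have hr1 : r < 1 := by rw [hrdef]; linarith
  have htr : |t| ≤ r := by rw [abs_of_nonneg ht0.le, hrdef]; linarith
  have sumA : Summable (fun x : ℕ => nbCoef k x * t ^ x) :=
    summable_nbCoef_A hk htr hr0 hr1
  have sumB : Summable (fun x : ℕ => nbCoef k x * x * t ^ x) :=
    summable_nbCoef_B hk htr hr0 hr1
  have sumPmf : Summable (fun x : ℕ => nbPmf k m x) := by
    simp only [hpmf]; exact sumA.mul_left c
  have sumXPmf : Summable (fun x : ℕ => (x : ℝ) * nbPmf k m x) := by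
    have : (fun x : ℕ => (x : ℝ) * nbPmf k m x) =
        fun x : ℕ => c * (nbCoef k x * x * t ^ x) := by
      funext x; rw [hpmf]; ring
    rw [this]; exact sumB.mul_left c
  -- total mass 1
  have S1 : (∑' x : ℕ, nbPmf k m x) = 1 := by
    rw [tsum_congr hpmf, tsum_mul_left]; exact hcA
  -- mean m
  have S2 : (∑' x : ℕ, (x : ℝ) * nbPmf k m x) = m := by
    have h1 : (∑' x : ℕ, (x : ℝ) * nbPmf k m x) =
        c * (∑' x : ℕ, nbCoef k x * x * t ^ x) := by
      rw [← tsum_mul_left]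
      exact tsum_congr fun x => by rw [hpmf]; ring
    have h2 := tsum_nbCoef_mul hk ht0.le ht1
    have h1tpos : 0 < 1 - t := by linarith
    have h3 : k * t = m * (1 - t) := by
      rw [h1t, htdef]; field_simp
    rw [h1]
    have h4 : (1 - t) * (c * (∑' x : ℕ, nbCoef k x * x * t ^ x)) =
        (1 - t) * m := by
      calc (1 - t) * (c * (∑' x : ℕ, nbCoef k x * x * t ^ x))
          = c * ((1 - t) * (∑' x : ℕ, nbCoef k x * x * t ^ x)) := by ring
        _ = c * (k * t * (∑' x : ℕ, nbCoef k x * t ^ x)) := by rw [h2]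
        _ = k * t * (c * (∑' x : ℕ, nbCoef k x * t ^ x)) := by ring
        _ = k * t := by rw [hcA, mul_one]
        _ = (1 - t) * m := by rw [h3]; ring
    exact mul_left_cancel₀ h1tpos.ne' h4
  -- pointwise decomposition of |x - m| * pmf
  have hsplit : ∀ x : ℕ, |(x : ℝ) - m| * nbPmf k m x =
      ((x : ℝ) * nbPmf k m x - m * nbPmf k m x) +
        (if x = 0 then 2 * m * nbPmf k m 0 else 0) := by
    intro x
    cases x with
    | zero =>
      simp only [Nat.cast_zero, zero_sub, abs_neg, abs_of_pos hm, if_pos rfl, zero_mul,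
        if_true]
      ring
    | succ n =>
      have h1 : (0:ℝ) ≤ ((n:ℝ) + 1) - m := by
        have : (0:ℝ) ≤ (n:ℝ) := n.cast_nonneg
        linarith
      simp only [Nat.succ_ne_zero, if_false, add_zero]
      push_cast
      rw [abs_of_nonneg (by push_cast at h1 ⊢; linarith)]
      ring
  have sumInd : Summable (fun x : ℕ => if x = 0 then 2 * m * nbPmf k m 0 else 0) := by
    apply summable_of_ne_finset_zero (s := {0})
    intro x hx
    simp at hx
    simp [hx]
  have hT : (∑' x : ℕ, |(x : ℝ) - m| * nbPmf k m x) = 2 * m * nbPmf k m 0 := by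
    rw [tsum_congr hsplit, Summable.tsum_add (sumXPmf.sub (sumPmf.mul_left m)) sumInd,
      Summable.tsum_sub sumXPmf (sumPmf.mul_left m), tsum_mul_left, S1, S2, tsum_ite_eq]
    ring
  have hpmf0 : nbPmf k m 0 = c := by
    rw [hpmf 0, nbCoef_zero' hk]
    ring
  rw [hT, hpmf0, hcdef]
  field_simp
end
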